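/- arXiv:2103.03870 — 3 statements merged into one kernel-verified Lean document; each statement's English description precedes it below -/
import Mathlib

section
/- Let g : ℕ → ℂ be a multiplicative function satisfying |g(n)| ≤ min(A·n^θ, B^{Ω(n)}) for all n ≥ 1 (constants A, B > 0, fixed 0 < θ < 1/48). Then there is a constant D > 0 depending only on A, B, θ such that for every z ≥ max(3, 2B²): ∑_{n ≥ 1 with P(n) ≤ z} |g(n)|²/n ≤ D·(log z)^{B²}; in particular ∑_{n ≤ z} |g(n)|²/n ≤ D·(log z)^{B²}. -/
open MeasureTheory ProbabilityTheory Filter Finset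
open scoped BigOperators Classical Real ENNReal

noncomputable section

/-- `g` is multiplicative: `g 1 = 1` and `g (m*n) = g m * g n` for coprime `m, n`. -/
def IsMult (g : ℕ → ℂ) : Prop :=
  g 1 = 1 ∧ ∀ m n : ℕ, Nat.Coprime m n → g (m * n) = g m * g n

/-- The bound `|g n| ≤ min (A n^θ) (B^(Ω n))`, where `Ω n` is the number of prime
factors of `n` counted with multiplicity. -/
def GBound (g : ℕ → ℂ) (A B θ : ℝ) : Prop :=
  ∀ n : ℕ, 1 ≤ n →
    ‖g n‖ ≤ min (A * (n : ℝ) ^ θ) (B ^ n.primeFactorsList.length)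

/-- The finite set of primes `p ≤ x`. -/
def primesUpTo (x : ℝ) : Finset ℕ :=
  (Finset.range (⌊x⌋₊ + 1)).filter fun p => p.Prime ∧ (p : ℝ) ≤ x

/-- `∑_{p ≤ x} |g p|² / p = α log log x + O(1)`. -/
def SelbergCond (g : ℕ → ℂ) (α : ℝ) : Prop :=
  ∃ C > 0, ∀ x : ℝ, 16 ≤ x →
    |(∑ p ∈ primesUpTo x, ‖g p‖ ^ 2 / (p : ℝ)) - α * Real.log (Real.log x)| ≤ C

/-- The partial sum `∑_{n ≤ x} g n · n^(-1/2 - it)`. -/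
def partialSum (g : ℕ → ℂ) (x : ℝ) (t : ℝ) : ℂ :=
  ∑ n ∈ Finset.Icc 1 ⌊x⌋₊, g n * (n : ℂ) ^ (-(1 / 2 : ℂ) - Complex.I * (t : ℂ))

/-- `Ψ` is the `2q`-th pseudomoment `Ψ_{2q,g}(x)`:
`Ψ = lim_{T → ∞} (1/T) ∫_T^{2T} |∑_{n ≤ x} g n n^(-1/2-it)|^{2q} dt`. -/
def IsPseudomoment (g : ℕ → ℂ) (q x Ψ : ℝ) : Prop :=
  Tendsto (fun T : ℝ => (1 / T) * ∫ t in T..(2 * T), ‖partialSum g x t‖ ^ (2 * q))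
    atTop (nhds Ψ)

/-- The uniform probability measure on the unit circle in `ℂ` (a Steinhaus distribution). -/
def circleMeasure : Measure ℂ :=
  Measure.map (fun θ : ℝ => Complex.exp (θ * Complex.I))
    ((ENNReal.ofReal (2 * Real.pi))⁻¹ • volume.restrict (Set.Ioc 0 (2 * Real.pi)))

/-- `X` is a Steinhaus random multiplicative function: a random completely multiplicative
function whose values at the primes are i.i.d. uniform on the unit circle. -/
def IsSteinhaus {Ωs : Type*} [MeasureSpace Ωs] (X : ℕ → Ωs → ℂ) : Prop :=
  (∀ n, Measurable (X n)) ∧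
  (∀ ω, X 1 ω = 1) ∧
  (∀ m n : ℕ, ∀ ω, X (m * n) ω = X m ω * X n ω) ∧
  iIndepFun (fun p : Nat.Primes => X (p : ℕ)) volume ∧
  ∀ p : ℕ, p.Prime → Measure.map (X p) volume = circleMeasure

/-- The local Euler factor `1 + ∑_{j ≥ 1} g(p^j) X(p)^j p^{-js}` at the prime `p`. -/
def eulerFactor {Ωs : Type*} (g : ℕ → ℂ) (X : ℕ → Ωs → ℂ) (p : ℕ) (s : ℂ) (ω : Ωs) : ℂ :=
  1 + ∑' j : ℕ, g (p ^ (j + 1)) * X p ω ^ (j + 1) * (p : ℂ) ^ (-(((j : ℂ) + 1) * s))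

/-- The Euler product `F(s) = ∏_{y ≤ p ≤ z} (1 + g(p)X(p)p^{-s} + g(p²)X(p)²p^{-2s} + ⋯)`. -/
def eulerProd {Ωs : Type*} (g : ℕ → ℂ) (X : ℕ → Ωs → ℂ) (y z : ℝ) (s : ℂ) (ω : Ωs) : ℂ :=
  ∏ p ∈ (primesUpTo z).filter (fun p : ℕ => y ≤ (p : ℝ)), eulerFactor g X p s ω

/-- The truncated Euler product `G_k(s)` over primes `p ≤ x^{e^{-k}}`. -/
def Gk {Ωs : Type*} (g : ℕ → ℂ) (X : ℕ → Ωs → ℂ) (x : ℝ) (k : ℕ) (s : ℂ) (ω : Ωs) : ℂ :=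
  ∏ p ∈ primesUpTo (x ^ Real.exp (-(k : ℝ))), eulerFactor g X p s ω

/-- `H_{k,σ}(t) = G_k(1/2 + σ + it)`. -/
def Hk {Ωs : Type*} (g : ℕ → ℂ) (X : ℕ → Ωs → ℂ) (x : ℝ) (k : ℕ) (σ t : ℝ) (ω : Ωs) : ℂ :=
  Gk g X x k (((1 / 2 + σ : ℝ) : ℂ) + (t : ℂ) * Complex.I) ω

/-! Put `f n = |g n|² / n` (`sqNormDiv g n`); it is nonnegative and multiplicative, so the sum
over `z`-smooth `n` is the Euler product `∏_{p ≤ z} ∑_j f (p^j)`. The bound `|g n| ≤ A n^θ` with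
`θ < 1/2` makes every local factor at most `A² / (1 - 2^(2θ-1))`, which is enough for the boundedly
many primes `p ≤ 2B²`. For `p > 2B²` the bound `|g (p^j)| ≤ B^j` gives the local factor
`≤ (1 - B²/p)⁻¹ ≤ exp (B²/p + 2B⁴/p²)`, and Mertens' estimate `∑_{p ≤ z} 1/p ≤ log log z + O(1)`
turns the product of these into `O((log z)^{B²})`. Mertens' estimate follows by partial summation
from `∑_{p ≤ n} log p / p ≤ log n + 2`, a consequence of Legendre's formula for `n!` and
Chebyshev's bound `θ(n) ≤ n log 4`. -/

open Real
open scoped Nat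

theorem Nat.div_le_factorization_factorial {n p : ℕ} (hp : p.Prime) :
    n / p ≤ (n !).factorization p := by
  rcases lt_or_ge n p with hnp | hpn
  · simp [Nat.div_eq_of_lt hnp]
  rw [Nat.factorization_factorial hp (Nat.lt_succ_self (Nat.log p n))]
  have hlog : 1 < Nat.log p n + 1 := by have := Nat.log_pos hp.one_lt hpn; omega
  simpa using Finset.single_le_sum (f := fun i => n / p ^ i) (fun _ _ => Nat.zero_le _)
    (Finset.mem_Ico.mpr ⟨le_rfl, hlog⟩)

theorem log_factorial_eq_sum_primesLE (n : ℕ) :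
    log (n ! : ℕ) = ∑ p ∈ Nat.primesLE n, ((n !).factorization p : ℝ) * log p := by
  refine (Real.log_nat_eq_sum_factorization _).trans
    (Finsupp.sum_of_support_subset _ (fun p hp => ?_) _ (by simp))
  rw [Nat.support_factorization] at hp
  have hp' := Nat.prime_of_mem_primeFactors hp
  exact Nat.mem_primesLE.2 ⟨hp'.dvd_factorial.1 (Nat.dvd_of_mem_primeFactors hp), hp'⟩

theorem sum_primesLE_div_mul_log_le_log_factorial (n : ℕ) :
    ∑ p ∈ Nat.primesLE n, ((n / p : ℕ) : ℝ) * log p ≤ log (n ! : ℕ) := by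
  rw [log_factorial_eq_sum_primesLE]
  refine sum_le_sum fun p hp => mul_le_mul_of_nonneg_right ?_ ?_
  · exact_mod_cast Nat.div_le_factorization_factorial (Nat.prime_of_mem_primesLE hp)
  · exact log_nonneg (by exact_mod_cast (Nat.one_lt_of_mem_primesLE hp).le)

theorem sum_primesLE_log_div_le (n : ℕ) :
    ∑ p ∈ Nat.primesLE n, log p / p ≤ log n + 2 := by
  rcases Nat.eq_zero_or_pos n with rfl | hn
  · simp
  have hn' : (0 : ℝ) < n := by exact_mod_cast hn
  have hterm : ∀ p ∈ Nat.primesLE n,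
      (n : ℝ) * (log p / p) ≤ ((n / p : ℕ) : ℝ) * log p + log p := by
    intro p hp
    have hp0 : (0 : ℝ) < p := by exact_mod_cast (Nat.prime_of_mem_primesLE hp).pos
    have hdiv : (n : ℝ) / p ≤ ((n / p : ℕ) : ℝ) + 1 := by
      rw [← Nat.floor_div_eq_div (K := ℝ)]
      exact (Nat.lt_floor_add_one _).le
    calc (n : ℝ) * (log p / p) = (n / p) * log p := by ring
      _ ≤ (((n / p : ℕ) : ℝ) + 1) * log p :=
        mul_le_mul_of_nonneg_right hdiv (log_nonneg (by exact_mod_cast hp0))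
      _ = _ := by ring
  have htheta : ∑ p ∈ Nat.primesLE n, log p ≤ log 4 * n := by
    rw [← Chebyshev.theta_eq_sum_primesLE_log]
    exact Chebyshev.theta_le_log4_mul_x n.cast_nonneg
  have hfact : log (n ! : ℕ) ≤ n * log n := by
    rw [← log_pow]
    exact log_le_log (by exact_mod_cast n.factorial_pos) (by exact_mod_cast n.factorial_le_pow)
  refine le_of_mul_le_mul_left ?_ hn'
  calc (n : ℝ) * ∑ p ∈ Nat.primesLE n, log p / p
      ≤ ∑ p ∈ Nat.primesLE n, (((n / p : ℕ) : ℝ) * log p + log p) := by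
        rw [mul_sum]; exact sum_le_sum hterm
    _ ≤ n * log n + log 4 * n := by
        rw [sum_add_distrib]
        linarith [sum_primesLE_div_mul_log_le_log_factorial n]
    _ ≤ n * (log n + 2) := by nlinarith [log_four_eq, log_two_lt_d9]

theorem one_sub_log_div_log_le_log_log_sub (n : ℕ) (hn : 2 ≤ n) :
    1 - log n / log (n + 1) ≤ log (log (n + 1)) - log (log n) := by
  have hn' : (2 : ℝ) ≤ n := by exact_mod_cast hn
  have h0 : 0 < log n := log_pos (by linarith)
  have h1 : log n < log (n + 1) := log_lt_log (by linarith) (by linarith)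
  rw [← log_div (by linarith) h0.ne']
  have := one_sub_inv_le_log_of_pos (x := log (n + 1) / log n) (div_pos (by linarith) h0)
  rwa [inv_div] at this

theorem sum_primesLE_one_sub_log_div_le (N : ℕ) (hN : 2 ≤ N) :
    ∑ p ∈ Nat.primesLE N, (1 - log p / log N) / p
      ≤ log (log N) - 2 / log N + (2 / log 2 - log (log 2)) := by
  induction N, hN using Nat.le_induction with
  | base =>
    have : Nat.primesLE 2 = {2} := by decide
    simp [this, div_self (log_pos one_lt_two).ne']
  | succ N hN ih =>
    have hN' : (2 : ℝ) ≤ N := by exact_mod_cast hN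
    have h0 : 0 < log N := log_pos (by linarith)
    have h1 : log N < log (N + 1) := log_lt_log (by linarith) (by linarith)
    have hS := sum_primesLE_log_div_le N
    -- Partial summation in disguise: the new term at `p = N + 1` vanishes.
    have hshift : ∑ p ∈ Nat.primesLE (N + 1), (1 - log p / log ((N + 1 : ℕ) : ℝ)) / p
        = ∑ p ∈ Nat.primesLE N, (1 - log p / log N) / p
          + (1 / log N - 1 / log (N + 1)) * ∑ p ∈ Nat.primesLE N, log p / p := by
      rw [← Finset.sum_subset (Nat.primesLE_mono (Nat.le_succ N)), mul_sum, ← sum_add_distrib]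
      · refine sum_congr rfl fun p _ => ?_
        push_cast; field_simp; ring
      · intro p hp hpN
        have hpN1 : p = N + 1 := by
          have := Nat.le_of_mem_primesLE hp
          have : ¬ p ≤ N := fun h => hpN (Nat.mem_primesLE.2 ⟨h, Nat.prime_of_mem_primesLE hp⟩)
          omega
        subst hpN1
        push_cast
        rw [div_self (by linarith), sub_self, zero_div]
    have hstep := one_sub_log_div_log_le_log_log_sub N hN
    have hdiff : 0 ≤ 1 / log N - 1 / log (N + 1) := by
      rw [sub_nonneg]; exact one_div_le_one_div_of_le h0 h1.le
    have key : (1 / log N - 1 / log (N + 1)) * ∑ p ∈ Nat.primesLE N, log p / p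
        ≤ 1 - log N / log (N + 1) + (2 / log N - 2 / log (N + 1)) := by
      calc _ ≤ (1 / log N - 1 / log (N + 1)) * (log N + 2) := mul_le_mul_of_nonneg_left hS hdiff
        _ = _ := by field_simp
    rw [hshift]; push_cast
    linarith

theorem sum_primesLE_inv_le (N : ℕ) (hN : 2 ≤ N) :
    ∑ p ∈ Nat.primesLE N, (p : ℝ)⁻¹ ≤ log (log N) + (1 + 2 / log 2 - log (log 2)) := by
  have hlogN : 0 < log N := log_pos (by exact_mod_cast hN)
  have hsplit : ∑ p ∈ Nat.primesLE N, (p : ℝ)⁻¹ = ∑ p ∈ Nat.primesLE N, (1 - log p / log N) / p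
      + (∑ p ∈ Nat.primesLE N, log p / p) / log N := by
    rw [sum_div, ← sum_add_distrib]
    exact sum_congr rfl fun p _ => by field_simp; ring
  have hS : (∑ p ∈ Nat.primesLE N, log p / p) / log N ≤ 1 + 2 / log N := by
    rw [div_le_iff₀ hlogN, add_mul, div_mul_cancel₀ _ hlogN.ne', one_mul]
    exact sum_primesLE_log_div_le N
  linarith [sum_primesLE_one_sub_log_div_le N hN]

theorem sum_primesLE_inv_sq_le_one (N : ℕ) : ∑ p ∈ N.primesLE, ((p : ℝ) ^ 2)⁻¹ ≤ 1 := by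
  calc ∑ p ∈ N.primesLE, ((p : ℝ) ^ 2)⁻¹ ≤ ∑ n ∈ Ioo 1 (N + 1), ((n : ℝ) ^ 2)⁻¹ :=
        sum_le_sum_of_subset_of_nonneg (fun p hp => mem_Ioo.2
          ⟨Nat.one_lt_of_mem_primesLE hp, Nat.lt_succ_of_le (Nat.le_of_mem_primesLE hp)⟩)
          fun _ _ _ => by positivity
    _ ≤ 2 / ((1 : ℕ) + 1) := sum_Ioo_inv_sq_le 1 (N + 1)
    _ = 1 := by norm_num

theorem sum_primesLE_le_log_log {N : ℕ} (hN : 2 ≤ N) (b : ℝ) :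
    ∑ p ∈ N.primesLE, (b ^ 2 / p + 2 * (b ^ 2 / p) ^ 2)
      ≤ b ^ 2 * (log (log N) + (1 + 2 / log 2 - log (log 2))) + 2 * b ^ 4 := by
  have hsplit : ∑ p ∈ N.primesLE, (b ^ 2 / p + 2 * (b ^ 2 / p) ^ 2)
      = b ^ 2 * ∑ p ∈ N.primesLE, (p : ℝ)⁻¹ + 2 * b ^ 4 * ∑ p ∈ N.primesLE, ((p : ℝ) ^ 2)⁻¹ := by
    rw [mul_sum, mul_sum, ← sum_add_distrib]
    exact sum_congr rfl fun p _ => by ring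
  have h1 := mul_le_mul_of_nonneg_left (sum_primesLE_inv_le N hN) (sq_nonneg b)
  have h2 := mul_le_mul_of_nonneg_left (sum_primesLE_inv_sq_le_one N)
    (by positivity : (0 : ℝ) ≤ 2 * b ^ 4)
  linarith

theorem tsum_le_of_le_geometric {a : ℕ → ℝ} {c r : ℝ} (ha : ∀ j, 0 ≤ a j) (hr0 : 0 ≤ r)
    (hr1 : r < 1) (hle : ∀ j, a j ≤ c * r ^ j) : ∑' j, a j ≤ c * (1 - r)⁻¹ := by
  have hgeom := summable_geometric_of_lt_one hr0 hr1
  calc ∑' j, a j ≤ ∑' j, c * r ^ j :=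
        Summable.tsum_le_tsum hle (.of_nonneg_of_le ha hle (hgeom.mul_left c)) (hgeom.mul_left c)
    _ = c * (1 - r)⁻¹ := by rw [tsum_mul_left, tsum_geometric_of_lt_one hr0 hr1]

theorem inv_one_sub_le_exp {t : ℝ} (ht : t ≤ 1 / 2) :
    (1 - t)⁻¹ ≤ exp (t + 2 * t ^ 2) := by
  rw [inv_le_iff_one_le_mul₀' (by linarith)]
  nlinarith [add_one_le_exp (t + 2 * t ^ 2), mul_nonneg (sq_nonneg t) (by linarith : 0 ≤ 1 - 2 * t)]

theorem two_rpow_lt_one {θ : ℝ} (hθ : θ < 1 / 2) : (2 : ℝ) ^ (2 * θ - 1) < 1 :=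
  rpow_lt_one_of_one_lt_of_neg one_lt_two (by linarith)

theorem prod_le_pow_floor_mul_exp_sum {s : Finset ℕ} {F a : ℕ → ℝ} {M c : ℝ} (hM : 1 ≤ M)
    (hF : ∀ p ∈ s, 0 ≤ F p) (ha : ∀ p ∈ s, 0 ≤ a p) (hsmall : ∀ p ∈ s, F p ≤ M)
    (hlarge : ∀ p ∈ s, c < p → F p ≤ exp (a p)) :
    ∏ p ∈ s, F p ≤ M ^ (⌊c⌋₊ + 1) * exp (∑ p ∈ s, a p) := by
  rw [← prod_filter_mul_prod_filter_not s (fun p : ℕ => (p : ℝ) ≤ c)]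
  have hcard : #(s.filter fun p : ℕ => (p : ℝ) ≤ c) ≤ ⌊c⌋₊ + 1 := by
    refine (card_le_card fun p hp => ?_).trans (card_range _).le
    exact mem_range.2 (Nat.lt_succ_of_le (Nat.le_floor (mem_filter.1 hp).2))
  have hsmall' : ∏ p ∈ s.filter (fun p : ℕ => (p : ℝ) ≤ c), F p ≤ M ^ (⌊c⌋₊ + 1) :=
    calc ∏ p ∈ s.filter (fun p : ℕ => (p : ℝ) ≤ c), F p
        ≤ ∏ _p ∈ s.filter (fun p : ℕ => (p : ℝ) ≤ c), M :=
          prod_le_prod (fun p hp => hF p (mem_filter.1 hp).1)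
            fun p hp => hsmall p (mem_filter.1 hp).1
      _ ≤ M ^ (⌊c⌋₊ + 1) := by rw [prod_const]; exact pow_le_pow_right₀ hM hcard
  have hlarge' : ∏ p ∈ s.filter (fun p : ℕ => ¬(p : ℝ) ≤ c), F p ≤ exp (∑ p ∈ s, a p) :=
    calc ∏ p ∈ s.filter (fun p : ℕ => ¬(p : ℝ) ≤ c), F p
        ≤ ∏ p ∈ s.filter (fun p : ℕ => ¬(p : ℝ) ≤ c), exp (a p) :=
          prod_le_prod (fun p hp => hF p (mem_filter.1 hp).1)
            fun p hp => hlarge p (mem_filter.1 hp).1 (not_le.1 (mem_filter.1 hp).2)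
      _ ≤ exp (∑ p ∈ s, a p) := by
          rw [← exp_sum]
          exact exp_le_exp.2 (sum_le_sum_of_subset_of_nonneg (filter_subset _ _)
            fun p hp _ => ha p hp)
  exact mul_le_mul hsmall' hlarge' (prod_nonneg fun p hp => hF p (mem_filter.1 hp).1)
    (pow_nonneg (zero_le_one.trans hM) _)

theorem hasSum_indicator_smoothNumbers_prod_primesLE {f : ℕ → ℝ} (hf₁ : f 1 = 1)
    (hmul : ∀ {m n : ℕ}, m.Coprime n → f (m * n) = f m * f n) (hf₀ : ∀ n, 0 ≤ f n)
    (hsum : ∀ {p : ℕ}, p.Prime → Summable fun j => f (p ^ j)) (N : ℕ) :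
    HasSum ((N + 1).smoothNumbers.indicator f) (∏ p ∈ N.primesLE, ∑' j, f (p ^ j)) := by
  have hnorm : ∀ {p : ℕ}, p.Prime → Summable fun j => ‖f (p ^ j)‖ := fun hp =>
    (hsum hp).congr fun j => (Real.norm_of_nonneg (hf₀ _)).symm
  exact hasSum_subtype_iff_indicator.1
    (EulerProduct.summable_and_hasSum_smoothNumbers_prod_primesBelow_tsum hf₁ hmul hnorm _).2

theorem mem_smoothNumbers_floor_add_one_iff {z : ℝ} (hz : 0 ≤ z) {n : ℕ} :
    n ∈ (⌊z⌋₊ + 1).smoothNumbers ↔ 1 ≤ n ∧ ∀ p ∈ n.primeFactors, (p : ℝ) ≤ z := by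
  simp only [Nat.mem_smoothNumbers, Nat.lt_succ_iff, ← Nat.le_floor_iff hz,
    Nat.one_le_iff_ne_zero, Nat.mem_primeFactors_iff_mem_primeFactorsList]

theorem sum_Icc_floor_le_of_hasSum_smooth {f : ℕ → ℝ} (hf : ∀ n, 0 ≤ f n) {z a : ℝ}
    (hz : 0 ≤ z)
    (h : HasSum (fun n : ℕ => if 1 ≤ n ∧ ∀ p ∈ n.primeFactors, (p : ℝ) ≤ z then f n else 0) a) :
    ∑ n ∈ Icc 1 ⌊z⌋₊, f n ≤ a := by
  calc ∑ n ∈ Icc 1 ⌊z⌋₊, f n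
      = ∑ n ∈ Icc 1 ⌊z⌋₊, if 1 ≤ n ∧ ∀ p ∈ n.primeFactors, (p : ℝ) ≤ z then f n else 0 := by
        refine sum_congr rfl fun n hn => (if_pos ?_).symm
        rw [mem_Icc] at hn
        exact (mem_smoothNumbers_floor_add_one_iff hz).1
          (Nat.mem_smoothNumbers_of_lt hn.1 (Nat.lt_succ_of_le hn.2))
    _ ≤ a := sum_le_hasSum _ (fun n _ => by split_ifs <;> simp [hf]) h

def sqNormDiv (g : ℕ → ℂ) (n : ℕ) : ℝ := ‖g n‖ ^ 2 / n

theorem sqNormDiv_nonneg (g : ℕ → ℂ) (n : ℕ) : 0 ≤ sqNormDiv g n := by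
  unfold sqNormDiv; positivity

section SqNormDiv

variable {g : ℕ → ℂ} {A B θ : ℝ}

theorem IsMult.sqNormDiv_one (hg : IsMult g) : sqNormDiv g 1 = 1 := by
  simp [sqNormDiv, hg.1]

theorem IsMult.sqNormDiv_mul (hg : IsMult g) {m n : ℕ} (hmn : m.Coprime n) :
    sqNormDiv g (m * n) = sqNormDiv g m * sqNormDiv g n := by
  simp only [sqNormDiv, hg.2 m n hmn, norm_mul, mul_pow, Nat.cast_mul]
  exact mul_div_mul_comm _ _ _ _

theorem GBound.one_le (h : GBound g A B θ) (hg : IsMult g) : 1 ≤ A := by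
  simpa [hg.1] using (le_min_iff.1 (h 1 le_rfl)).1

theorem GBound.sqNormDiv_le_rpow (h : GBound g A B θ) {n : ℕ} (hn : 1 ≤ n) :
    sqNormDiv g n ≤ A ^ 2 * (n : ℝ) ^ (2 * θ - 1) := by
  have hn0 : (0 : ℝ) < n := by exact_mod_cast hn
  have hnorm : ‖g n‖ ≤ A * (n : ℝ) ^ θ := (le_min_iff.1 (h n hn)).1
  calc sqNormDiv g n ≤ (A * (n : ℝ) ^ θ) ^ 2 / n := by
        unfold sqNormDiv; gcongr
    _ = A ^ 2 * (n : ℝ) ^ (2 * θ - 1) := by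
        rw [rpow_sub_one hn0.ne', mul_comm 2 θ, rpow_mul hn0.le, rpow_two]; ring

theorem GBound.sqNormDiv_prime_pow_le (h : GBound g A B θ) {p : ℕ} (hp : p.Prime) (j : ℕ) :
    sqNormDiv g (p ^ j) ≤ (B ^ 2 / p) ^ j := by
  have hnorm : ‖g (p ^ j)‖ ≤ B ^ j := by
    simpa [hp.primeFactorsList_pow] using (le_min_iff.1 (h _ (Nat.one_le_pow j p hp.pos))).2
  calc sqNormDiv g (p ^ j) ≤ (B ^ j) ^ 2 / (p : ℝ) ^ j := by
        unfold sqNormDiv; push_cast; gcongr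
    _ = (B ^ 2 / p) ^ j := by ring

theorem GBound.sqNormDiv_prime_pow_le_geometric (h : GBound g A B θ) (hθ : θ ≤ 1 / 2) {p : ℕ}
    (hp : p.Prime) (j : ℕ) : sqNormDiv g (p ^ j) ≤ A ^ 2 * ((2 : ℝ) ^ (2 * θ - 1)) ^ j := by
  have hp2 : (2 : ℝ) ≤ p := by exact_mod_cast hp.two_le
  calc sqNormDiv g (p ^ j) ≤ A ^ 2 * ((p : ℝ) ^ j) ^ (2 * θ - 1) := by
        exact_mod_cast h.sqNormDiv_le_rpow (Nat.one_le_pow j p hp.pos)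
    _ = A ^ 2 * ((p : ℝ) ^ (2 * θ - 1)) ^ j := by rw [rpow_pow_comm (Nat.cast_nonneg p)]
    _ ≤ A ^ 2 * ((2 : ℝ) ^ (2 * θ - 1)) ^ j := by
        have := rpow_le_rpow_of_nonpos two_pos hp2 (by linarith : 2 * θ - 1 ≤ 0)
        gcongr

theorem GBound.summable_sqNormDiv_prime_pow (h : GBound g A B θ) (hθ : θ < 1 / 2) {p : ℕ}
    (hp : p.Prime) : Summable fun j => sqNormDiv g (p ^ j) :=
  .of_nonneg_of_le (fun _ => sqNormDiv_nonneg _ _) (h.sqNormDiv_prime_pow_le_geometric hθ.le hp)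
    ((summable_geometric_of_lt_one (by positivity) (two_rpow_lt_one hθ)).mul_left _)

theorem GBound.tsum_sqNormDiv_prime_pow_le (h : GBound g A B θ) (hθ : θ < 1 / 2) {p : ℕ}
    (hp : p.Prime) : ∑' j, sqNormDiv g (p ^ j) ≤ A ^ 2 * (1 - 2 ^ (2 * θ - 1))⁻¹ :=
  tsum_le_of_le_geometric (fun _ => sqNormDiv_nonneg _ _) (by positivity) (two_rpow_lt_one hθ)
    (h.sqNormDiv_prime_pow_le_geometric hθ.le hp)

theorem GBound.tsum_sqNormDiv_prime_pow_le_exp (h : GBound g A B θ) {p : ℕ} (hp : p.Prime)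
    (hpB : 2 * B ^ 2 < p) : ∑' j, sqNormDiv g (p ^ j) ≤ exp (B ^ 2 / p + 2 * (B ^ 2 / p) ^ 2) := by
  have hp0 : (0 : ℝ) < p := by exact_mod_cast hp.pos
  have ht : B ^ 2 / p < 1 / 2 := by rw [div_lt_iff₀ hp0]; linarith
  calc ∑' j, sqNormDiv g (p ^ j) ≤ 1 * (1 - B ^ 2 / p)⁻¹ :=
        tsum_le_of_le_geometric (fun _ => sqNormDiv_nonneg _ _) (by positivity) (by linarith)
          fun j => (h.sqNormDiv_prime_pow_le hp j).trans_eq (one_mul _).symm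
    _ ≤ exp (B ^ 2 / p + 2 * (B ^ 2 / p) ^ 2) := by
        rw [one_mul]; exact inv_one_sub_le_exp ht.le

theorem GBound.hasSum_ite_smooth_sqNormDiv (h : GBound g A B θ) (hg : IsMult g)
    (hθ : θ < 1 / 2) {z : ℝ} (hz : 0 ≤ z) :
    HasSum (fun n : ℕ => if 1 ≤ n ∧ ∀ p ∈ n.primeFactors, (p : ℝ) ≤ z then sqNormDiv g n else 0)
      (∏ p ∈ (⌊z⌋₊).primesLE, ∑' j, sqNormDiv g (p ^ j)) := by
  convert hasSum_indicator_smoothNumbers_prod_primesLE hg.sqNormDiv_one hg.sqNormDiv_mul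
    (sqNormDiv_nonneg g) (h.summable_sqNormDiv_prime_pow hθ) ⌊z⌋₊ using 2 with n
  simp only [Set.indicator_apply, ← mem_smoothNumbers_floor_add_one_iff hz]

theorem GBound.exists_prod_primesLE_tsum_sqNormDiv_le (h : GBound g A B θ) (hg : IsMult g)
    (hθ : θ < 1 / 2) :
    ∃ D > 0, ∀ N : ℕ, 2 ≤ N →
      ∏ p ∈ N.primesLE, ∑' j, sqNormDiv g (p ^ j) ≤ D * log N ^ (B ^ 2) := by
  set M := A ^ 2 * (1 - 2 ^ (2 * θ - 1))⁻¹
  set C := 1 + 2 / log 2 - log (log 2)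
  have hM : 1 ≤ M := by
    have hr : 0 < 1 - (2 : ℝ) ^ (2 * θ - 1) := sub_pos.2 (two_rpow_lt_one hθ)
    have hA : 1 ≤ A ^ 2 := one_le_pow₀ (h.one_le hg)
    exact one_le_mul_of_one_le_of_one_le hA
      (one_le_inv₀ hr |>.2 (sub_le_self _ (by positivity)))
  refine ⟨M ^ (⌊2 * B ^ 2⌋₊ + 1) * exp (B ^ 2 * C + 2 * B ^ 4),
    mul_pos (pow_pos (one_pos.trans_le hM) _) (exp_pos _), fun N hN => ?_⟩
  have hlogN : 0 < log N := log_pos (by exact_mod_cast hN)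
  calc ∏ p ∈ N.primesLE, ∑' j, sqNormDiv g (p ^ j)
      ≤ M ^ (⌊2 * B ^ 2⌋₊ + 1) * exp (∑ p ∈ N.primesLE, (B ^ 2 / p + 2 * (B ^ 2 / p) ^ 2)) :=
        prod_le_pow_floor_mul_exp_sum hM (fun _ _ => tsum_nonneg fun _ => sqNormDiv_nonneg _ _)
          (fun _ _ => by positivity)
          (fun p hp => h.tsum_sqNormDiv_prime_pow_le hθ (Nat.prime_of_mem_primesLE hp))
          (fun p hp => h.tsum_sqNormDiv_prime_pow_le_exp (Nat.prime_of_mem_primesLE hp))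
    _ ≤ M ^ (⌊2 * B ^ 2⌋₊ + 1) * exp (B ^ 2 * (log (log N) + C) + 2 * B ^ 4) := by
        gcongr; exact sum_primesLE_le_log_log hN B
    _ = M ^ (⌊2 * B ^ 2⌋₊ + 1) * exp (B ^ 2 * C + 2 * B ^ 4) * log N ^ (B ^ 2) := by
        rw [rpow_def_of_pos hlogN, mul_assoc, ← exp_add]; ring_nf

end SqNormDiv

theorem smooth_sum_trivial_bound_general
    (g : ℕ → ℂ) (A B θ : ℝ) (hθ : θ < 1 / 48)
    (hmult : IsMult g) (hbound : GBound g A B θ) :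
    ∃ D > (0 : ℝ), ∀ z : ℝ, max 3 (2 * B ^ 2) ≤ z →
      (∑' n : ℕ, if 1 ≤ n ∧ ∀ p ∈ n.primeFactors, (p : ℝ) ≤ z
          then ‖g n‖ ^ 2 / (n : ℝ) else 0)
        ≤ D * (Real.log z) ^ (B ^ 2) ∧
      (∑ n ∈ Finset.Icc 1 ⌊z⌋₊, ‖g n‖ ^ 2 / (n : ℝ)) ≤ D * (Real.log z) ^ (B ^ 2) := by
  have hθ' : θ < 1 / 2 := by linarith
  obtain ⟨D, hD, hprod⟩ := hbound.exists_prod_primesLE_tsum_sqNormDiv_le hmult hθ'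
  refine ⟨D, hD, fun z hz => ?_⟩
  have hz : 3 ≤ z := (le_max_left _ _).trans hz
  have hz0 : 0 ≤ z := by linarith
  have hN : 2 ≤ ⌊z⌋₊ := Nat.le_floor (by norm_num; linarith)
  have hsmooth := hbound.hasSum_ite_smooth_sqNormDiv hmult hθ' hz0
  have hle : ∏ p ∈ (⌊z⌋₊).primesLE, ∑' j, sqNormDiv g (p ^ j) ≤ D * log z ^ (B ^ 2) := by
    refine (hprod _ hN).trans ?_
    gcongr
    exact Nat.floor_le hz0
  exact ⟨hsmooth.tsum_eq ▸ hle,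
    (sum_Icc_floor_le_of_hasSum_smooth (sqNormDiv_nonneg g) hz0 hsmooth).trans hle⟩

/-- A trivial bound for smooth sums: there is `D > 0` depending
only on `A, B, θ` such that for all `z ≥ max(3, 2B²)`,
`∑_{n ≥ 1, P(n) ≤ z} |g n|²/n ≤ D (log z)^{B²}` and in particular
`∑_{n ≤ z} |g n|²/n ≤ D (log z)^{B²}`. -/
theorem smooth_sum_trivial_bound
    (g : ℕ → ℂ) (A B θ : ℝ) (hA : 0 < A) (hB : 0 < B) (hθ0 : 0 < θ) (hθ : θ < 1 / 48)
    (hmult : IsMult g) (hbound : GBound g A B θ) :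
    ∃ D > (0 : ℝ), ∀ z : ℝ, max 3 (2 * B ^ 2) ≤ z →
      (∑' n : ℕ, if 1 ≤ n ∧ ∀ p ∈ n.primeFactors, (p : ℝ) ≤ z
          then ‖g n‖ ^ 2 / (n : ℝ) else 0)
        ≤ D * (Real.log z) ^ (B ^ 2) ∧
      (∑ n ∈ Finset.Icc 1 ⌊z⌋₊, ‖g n‖ ^ 2 / (n : ℝ)) ≤ D * (Real.log z) ^ (B ^ 2) :=
  smooth_sum_trivial_bound_general g A B θ hθ hmult hbound
end
end

section
/- Let g : ℕ → ℂ be a multiplicative function satisfying |g(n)| ≤ min(A·n^θ, B^{Ω(n)}) for all n ≥ 1 (constants A, B > 0, fixed 0 < θ < 1/48). Then there is a constant C > 0 depending only on A, B, θ such that for all sufficiently large x and all q with 0 < q ≤ 1/(log log x) one has Ψ_{2q,g}(x) ≤ C. -/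
/-!
For `0 < q ≤ 1` concavity of `t ↦ t ^ q` gives `Ψ_{2q,g}(x) ≤ M ^ q`, where
`M = ∑_{n ≤ x} |g n|² / n` is the mean value of `|∑_{n ≤ x} g n n^(-1/2-it)|²`: integrating the
square over `[T, 2T]`, the diagonal gives `M T` and the off-diagonal terms stay bounded in `T`.
By multiplicativity `M ≤ ∏_{p ≤ x} (1 + ∑_{k ≥ 1} |g (p^k)|² / p^k)`. The bound `|g p| ≤ B` controls
`k = 1`, and `|g n| ≤ A n^θ` with `θ ≤ 1/4` makes the terms `k ≥ 2` a geometric series of size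
`O(A² / p)`, so `M ≤ exp ((B² + 4A²) ∑_{p ≤ x} 1/p)`. Chebyshev's dyadic estimate gives
`∑_{p ≤ x} 1/p ≤ 4 log log x + 8`, hence `M ^ q ≤ exp (12 (B² + 4A²))` once `q log log x ≤ 1`.
-/

open MeasureTheory ProbabilityTheory Filter Finset
open scoped BigOperators Classical Real ENNReal

noncomputable section

-- The mean value in `t` of `‖partialSum g x t‖ ^ 2`, for `N = ⌊x⌋₊`.
def meanSquare (g : ℕ → ℂ) (N : ℕ) : ℝ :=
  ∑ n ∈ Icc 1 N, ‖g n‖ ^ 2 / n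

section ReciprocalPrimes

open Real

theorem mul_card_le_of_primes_mem_Ico {j : ℕ} {P : Finset ℕ}
    (hP : ∀ p ∈ P, p.Prime ∧ 2 ^ j ≤ p ∧ p < 2 ^ (j + 1)) : j * #P ≤ 2 ^ (j + 2) := by
  have hprod : ∏ p ∈ P, p ≤ primorial (2 ^ (j + 1)) := by
    refine Nat.le_of_dvd (primorial_pos _) (prod_dvd_prod_of_subset _ _ _ fun p hp => ?_)
    simp only [mem_filter, mem_range]
    exact ⟨by grind, (hP p hp).1⟩
  refine (Nat.pow_le_pow_iff_right (le_refl 2)).1 ?_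
  calc 2 ^ (j * #P) = (2 ^ j) ^ #P := pow_mul _ _ _
    _ ≤ ∏ p ∈ P, p := pow_card_le_prod _ _ _ fun p hp => (hP p hp).2.1
    _ ≤ 4 ^ 2 ^ (j + 1) := hprod.trans (primorial_le_four_pow _)
    _ = 2 ^ 2 ^ (j + 2) := by rw [show 4 = 2 ^ 2 from rfl, ← pow_mul, pow_succ 2 (j + 1), mul_comm]

theorem sum_inv_le_of_primes_mem_Ico {j : ℕ} (hj : 1 ≤ j) {P : Finset ℕ}
    (hP : ∀ p ∈ P, p.Prime ∧ 2 ^ j ≤ p ∧ p < 2 ^ (j + 1)) : ∑ p ∈ P, (1 / p : ℝ) ≤ 4 / j := by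
  have hcard : (j * #P : ℝ) ≤ 4 * 2 ^ j := by
    exact_mod_cast (mul_card_le_of_primes_mem_Ico hP).trans_eq (by ring)
  calc ∑ p ∈ P, (1 / p : ℝ) ≤ ∑ p ∈ P, (1 / 2 ^ j : ℝ) :=
        sum_le_sum fun p hp => one_div_le_one_div_of_le (by positivity)
          (by exact_mod_cast (hP p hp).2.1)
    _ = #P / 2 ^ j := by rw [sum_const, nsmul_eq_mul, mul_one_div]
    _ ≤ 4 / j := by
        rw [div_le_div_iff₀ (by positivity) (by exact_mod_cast hj)]
        linarith

theorem sum_primesBelow_inv_le {N : ℕ} (hN : 2 ≤ N) :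
    ∑ p ∈ (N + 1).primesBelow, (1 / p : ℝ) ≤ 4 * log (log N) + 8 := by
  set J := Nat.log 2 N
  have hmaps : ∀ p ∈ (N + 1).primesBelow, Nat.log 2 p ∈ Icc 1 J := fun p hp => by
    rw [Nat.mem_primesBelow] at hp
    exact mem_Icc.2 ⟨Nat.log_pos one_lt_two hp.2.two_le, Nat.log_mono_right (by omega)⟩
  have hblocks : ∀ j ∈ Icc 1 J,
      ∑ p ∈ (N + 1).primesBelow with Nat.log 2 p = j, (1 / p : ℝ) ≤ 4 / j := by
    refine fun j hj => sum_inv_le_of_primes_mem_Ico (mem_Icc.1 hj).1 fun p hp => ?_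
    obtain ⟨hpN, rfl⟩ := mem_filter.1 hp
    have hp := (Nat.mem_primesBelow.1 hpN).2
    exact ⟨hp, Nat.pow_log_le_self 2 hp.ne_zero, Nat.lt_pow_succ_log_self one_lt_two p⟩
  have hharmonic : ∑ j ∈ Icc 1 J, (4 / j : ℝ) ≤ 4 * (1 + log J) := by
    have h := harmonic_le_one_add_log J
    rw [harmonic_eq_sum_Icc] at h
    push_cast at h
    simp_rw [div_eq_mul_inv, ← mul_sum]
    gcongr
  have hJ : (1 : ℝ) ≤ J := by exact_mod_cast Nat.log_pos one_lt_two hN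
  have hlogN : log 2 ≤ log N := log_le_log two_pos (by exact_mod_cast hN)
  have hJ_le : (J : ℝ) ≤ 2 * log N := by
    have h := log_le_log (by positivity) (by exact_mod_cast Nat.pow_log_le_self 2 (by omega) :
      (2 : ℝ) ^ J ≤ N)
    rw [log_pow] at h
    nlinarith [log_two_gt_d9]
  have hlogJ : log J ≤ log 2 + log (log N) := by
    rw [← log_mul two_ne_zero (by linarith [log_two_gt_d9])]
    exact log_le_log (by linarith) hJ_le
  rw [← sum_fiberwise_of_maps_to hmaps]
  linarith [sum_le_sum hblocks, log_two_lt_d9]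

end ReciprocalPrimes

section EulerProduct

open Real

theorem sum_Icc_le_exp_sum_primesBelow {f : ℕ → ℝ} (hf₀ : ∀ n, 0 ≤ f n) (hf₁ : f 1 = 1)
    (hmul : ∀ {m n : ℕ}, m.Coprime n → f (m * n) = f m * f n)
    (hsum : ∀ {p : ℕ}, p.Prime → Summable fun k => f (p ^ k)) (N : ℕ) :
    ∑ n ∈ Icc 1 N, f n ≤ exp (∑ p ∈ (N + 1).primesBelow, ∑' k, f (p ^ (k + 1))) := by
  have hEuler := (EulerProduct.summable_and_hasSum_smoothNumbers_prod_primesBelow_tsum hf₁ hmul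
    (fun hp => (hsum hp).abs) (N + 1)).2
  have htail_nonneg : ∀ p, 0 ≤ ∑' k, f (p ^ (k + 1)) := fun p => tsum_nonneg fun k => hf₀ _
  calc ∑ n ∈ Icc 1 N, f n = ∑ n ∈ Icc 1 N, (N + 1).smoothNumbers.indicator f n :=
        sum_congr rfl fun n hn => (Set.indicator_of_mem (Nat.mem_smoothNumbers_of_lt
          (by grind) (by grind)) f).symm
    _ ≤ ∏ p ∈ (N + 1).primesBelow, ∑' k, f (p ^ k) :=
        sum_le_hasSum _ (fun n _ => Set.indicator_nonneg (fun n _ => hf₀ n) n)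
          (hasSum_subtype_iff_indicator.1 hEuler)
    _ = ∏ p ∈ (N + 1).primesBelow, (1 + ∑' k, f (p ^ (k + 1))) :=
        prod_congr rfl fun p hp => by
          rw [(hsum (Nat.prime_of_mem_primesBelow hp)).tsum_eq_zero_add, pow_zero, hf₁]
    _ ≤ ∏ p ∈ (N + 1).primesBelow, exp (∑' k, f (p ^ (k + 1))) :=
        prod_le_prod (fun p _ => by linarith [htail_nonneg p]) fun p _ => by
          linarith [add_one_le_exp (∑' k, f (p ^ (k + 1)))]
    _ = exp (∑ p ∈ (N + 1).primesBelow, ∑' k, f (p ^ (k + 1))) := (exp_sum _ _).symm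

theorem sq_rpow_two_mul_sub_one_le {θ p : ℝ} (hθ : θ ≤ 1 / 4) (hp : 1 ≤ p) :
    (p ^ (2 * θ - 1)) ^ 2 ≤ p⁻¹ := by
  rw [← rpow_mul_natCast (by linarith), ← rpow_neg_one]
  exact rpow_le_rpow_of_exponent_le hp (by push_cast; linarith)

section GBound

variable {g : ℕ → ℂ} {A B θ : ℝ}

theorem IsMult.norm_sq_div_mul (hg : IsMult g) {m n : ℕ} (hmn : m.Coprime n) :
    ‖g (m * n)‖ ^ 2 / (m * n : ℕ) = ‖g m‖ ^ 2 / m * (‖g n‖ ^ 2 / n) := by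
  rw [hg.2 m n hmn, norm_mul, mul_pow, Nat.cast_mul, mul_div_mul_comm]

theorem GBound.norm_sq_div_le (h : GBound g A B θ) {n : ℕ} (hn : 1 ≤ n) :
    ‖g n‖ ^ 2 / n ≤ A ^ 2 * (n : ℝ) ^ (2 * θ - 1) := by
  have hn0 : (0 : ℝ) < n := by exact_mod_cast hn
  have hsq : ‖g n‖ ^ 2 ≤ (A * (n : ℝ) ^ θ) ^ 2 :=
    pow_le_pow_left₀ (norm_nonneg _) ((h n hn).trans (min_le_left _ _)) 2
  rw [rpow_sub_one hn0.ne', mul_div_assoc', div_le_div_iff_of_pos_right hn0]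
  refine hsq.trans_eq ?_
  rw [mul_pow, ← rpow_mul_natCast hn0.le, mul_comm θ]
  norm_num

theorem GBound.norm_sq_div_prime_le (h : GBound g A B θ) {p : ℕ} (hp : p.Prime) :
    ‖g p‖ ^ 2 / p ≤ B ^ 2 / p := by
  have hB := (h p hp.one_le).trans (min_le_right _ _)
  rw [Nat.primeFactorsList_prime hp, List.length_singleton, pow_one] at hB
  gcongr

theorem GBound.norm_sq_div_prime_pow_le (h : GBound g A B θ) {p : ℕ} (hp : p.Prime) (k : ℕ) :
    ‖g (p ^ k)‖ ^ 2 / (p ^ k : ℕ) ≤ A ^ 2 * ((p : ℝ) ^ (2 * θ - 1)) ^ k := by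
  rw [rpow_pow_comm (Nat.cast_nonneg p), ← Nat.cast_pow]
  exact h.norm_sq_div_le (Nat.one_le_pow _ _ hp.pos)

theorem GBound.summable_norm_sq_div_prime_pow (h : GBound g A B θ) (hθ : θ ≤ 1 / 4) {p : ℕ}
    (hp : p.Prime) : Summable fun k => ‖g (p ^ k)‖ ^ 2 / (p ^ k : ℕ) := by
  have hp2 : (2 : ℝ) ≤ p := by exact_mod_cast hp.two_le
  have hσ := sq_rpow_two_mul_sub_one_le hθ (by linarith : (1 : ℝ) ≤ p)
  have hσ1 : (p : ℝ) ^ (2 * θ - 1) < 1 := by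
    nlinarith [inv_anti₀ two_pos hp2, rpow_nonneg (Nat.cast_nonneg p) (2 * θ - 1)]
  exact .of_nonneg_of_le (fun k => by positivity) (h.norm_sq_div_prime_pow_le hp)
    ((summable_geometric_of_lt_one (by positivity) hσ1).mul_left _)

theorem GBound.tsum_norm_sq_div_prime_pow_succ_le (h : GBound g A B θ) (hθ : θ ≤ 1 / 4) {p : ℕ}
    (hp : p.Prime) :
    ∑' k, ‖g (p ^ (k + 1))‖ ^ 2 / (p ^ (k + 1) : ℕ) ≤ (B ^ 2 + 4 * A ^ 2) / p := by
  set σ := (p : ℝ) ^ (2 * θ - 1)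
  have hp2 : (2 : ℝ) ≤ p := by exact_mod_cast hp.two_le
  have hσ0 : 0 ≤ σ := by positivity
  have hσ := sq_rpow_two_mul_sub_one_le hθ (by linarith : (1 : ℝ) ≤ p)
  have hσ1 : σ ≤ 3 / 4 := by nlinarith [inv_anti₀ two_pos hp2]
  have hs := h.summable_norm_sq_div_prime_pow hθ hp
  rw [((summable_nat_add_iff 1).2 hs).tsum_eq_zero_add]
  have hhigher : ∑' k, ‖g (p ^ (k + 2))‖ ^ 2 / (p ^ (k + 2) : ℕ) ≤ A ^ 2 * σ ^ 2 * (1 - σ)⁻¹ := by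
    rw [← tsum_geometric_of_lt_one hσ0 (by linarith), ← tsum_mul_left]
    refine ((summable_nat_add_iff 2).2 hs).tsum_le_tsum (fun k => ?_)
      ((summable_geometric_of_lt_one hσ0 (by linarith)).mul_left _)
    exact (h.norm_sq_div_prime_pow_le hp _).trans_eq (by ring)
  have hinv : (1 - σ)⁻¹ ≤ 4 := by
    rw [inv_le_comm₀ (by linarith) four_pos]; linarith
  calc ‖g (p ^ 1)‖ ^ 2 / (p ^ 1 : ℕ) + ∑' k, ‖g (p ^ (k + 2))‖ ^ 2 / (p ^ (k + 2) : ℕ)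
      ≤ B ^ 2 / p + A ^ 2 * (p : ℝ)⁻¹ * 4 := by
        rw [pow_one]
        exact add_le_add (h.norm_sq_div_prime_le hp) (hhigher.trans
          (mul_le_mul (by gcongr) hinv (inv_nonneg.2 (by linarith)) (by positivity)))
    _ = (B ^ 2 + 4 * A ^ 2) / p := by ring

theorem meanSquare_le_exp (hmult : IsMult g) (h : GBound g A B θ) (hθ : θ ≤ 1 / 4) {N : ℕ}
    (hN : 2 ≤ N) : meanSquare g N ≤ exp ((B ^ 2 + 4 * A ^ 2) * (4 * log (log N) + 8)) := by
  have hEuler := sum_Icc_le_exp_sum_primesBelow (f := fun n => ‖g n‖ ^ 2 / n)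
    (fun n => by positivity) (by simp [hmult.1]) hmult.norm_sq_div_mul
    (h.summable_norm_sq_div_prime_pow hθ) N
  refine hEuler.trans (exp_le_exp.2 ?_)
  calc ∑ p ∈ (N + 1).primesBelow, ∑' k, ‖g (p ^ (k + 1))‖ ^ 2 / (p ^ (k + 1) : ℕ)
      ≤ ∑ p ∈ (N + 1).primesBelow, (B ^ 2 + 4 * A ^ 2) * (1 / p) :=
        sum_le_sum fun p hp => (h.tsum_norm_sq_div_prime_pow_succ_le hθ
          (Nat.prime_of_mem_primesBelow hp)).trans_eq (by ring)
    _ ≤ (B ^ 2 + 4 * A ^ 2) * (4 * log (log N) + 8) := by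
        rw [← mul_sum]; gcongr; exact sum_primesBelow_inv_le hN

end GBound

end EulerProduct

section MeanValue

open Complex ComplexConjugate

theorem norm_intervalIntegral_exp_mul_I_le {μ : ℝ} (hμ : μ ≠ 0) (u v : ℝ) :
    ‖∫ t in u..v, cexp (μ * I * t)‖ ≤ 2 / |μ| := by
  have hc : (μ : ℂ) * I ≠ 0 := mul_ne_zero (ofReal_ne_zero.2 hμ) I_ne_zero
  have hnorm : ∀ t : ℝ, ‖cexp (μ * I * t)‖ = 1 := fun t => by
    rw [mul_right_comm, ← ofReal_mul]; exact norm_exp_ofReal_mul_I _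
  rw [integral_exp_mul_complex hc, norm_div, norm_mul, norm_I, mul_one, norm_real,
    Real.norm_eq_abs]
  gcongr
  exact (norm_sub_le _ _).trans_eq (by rw [hnorm, hnorm]; norm_num)

theorem mul_conj_sum_exp {ι : Type*} (s : Finset ι) (a : ι → ℂ) (ν : ι → ℝ) (t : ℝ) :
    (∑ i ∈ s, a i * cexp (ν i * I * t)) * conj (∑ i ∈ s, a i * cexp (ν i * I * t)) =
      ∑ i ∈ s, ∑ j ∈ s, a i * conj (a j) * cexp (↑(ν i - ν j) * I * t) := by
  rw [map_sum, sum_mul_sum]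
  refine sum_congr rfl fun i _ => sum_congr rfl fun j _ => ?_
  rw [map_mul, ← exp_conj, map_mul, map_mul, conj_ofReal, conj_ofReal, conj_I,
    show ((ν i - ν j : ℝ) : ℂ) * I * t = ν i * I * t + ν j * -I * t by push_cast; ring, exp_add]
  ring

theorem ofReal_intervalIntegral_norm_sum_sq {ι : Type*} (s : Finset ι) (a : ι → ℂ) (ν : ι → ℝ)
    (u v : ℝ) :
    ((∫ t in u..v, ‖∑ i ∈ s, a i * cexp (ν i * I * t)‖ ^ 2 : ℝ) : ℂ) =
      ∑ i ∈ s, ∑ j ∈ s, a i * conj (a j) * ∫ t in u..v, cexp (↑(ν i - ν j) * I * t) := by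
  have hcont : ∀ i j, Continuous fun t : ℝ => a i * conj (a j) * cexp (↑(ν i - ν j) * I * t) :=
    fun i j => by fun_prop
  rw [← intervalIntegral.integral_ofReal]
  simp_rw [ofReal_pow, ← mul_conj', mul_conj_sum_exp]
  rw [intervalIntegral.integral_finsetSum (f := fun i t => ∑ j ∈ s, _)
    fun i _ => (continuous_finsetSum s fun j _ => hcont i j).intervalIntegrable u v]
  refine sum_congr rfl fun i _ => ?_
  rw [intervalIntegral.integral_finsetSum fun j _ => (hcont i j).intervalIntegrable u v]
  simp_rw [intervalIntegral.integral_const_mul]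

theorem exists_intervalIntegral_norm_sum_sq_le {ι : Type*} (s : Finset ι) (a : ι → ℂ) {ν : ι → ℝ}
    (hν : Set.InjOn ν s) : ∃ K, ∀ u v : ℝ,
      ∫ t in u..v, ‖∑ i ∈ s, a i * cexp (ν i * I * t)‖ ^ 2 ≤
        (∑ i ∈ s, ‖a i‖ ^ 2) * (v - u) + K := by
  refine ⟨∑ i ∈ s, ∑ j ∈ s.erase i, ‖a i‖ * ‖a j‖ * (2 / |ν i - ν j|), fun u v => ?_⟩
  set E : ι → ι → ℂ := fun i j => ∫ t in u..v, cexp (↑(ν i - ν j) * I * t)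
  have hdiag : ∀ i, a i * conj (a i) * E i i = ((‖a i‖ ^ 2 * (v - u) : ℝ) : ℂ) := fun i => by
    simp [E, mul_conj']
  have hoff : ∀ i ∈ s, ∀ j ∈ s.erase i,
      ‖a i * conj (a j) * E i j‖ ≤ ‖a i‖ * ‖a j‖ * (2 / |ν i - ν j|) := by
    intro i hi j hj
    have hne : ν i - ν j ≠ 0 := sub_ne_zero.2 fun h =>
      (ne_of_mem_erase hj) (hν (mem_of_mem_erase hj) hi h.symm)
    rw [norm_mul, norm_mul, RCLike.norm_conj]
    gcongr
    exact norm_intervalIntegral_exp_mul_I_le hne u v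
  have hexpand : ((∫ t in u..v, ‖∑ i ∈ s, a i * cexp (ν i * I * t)‖ ^ 2 : ℝ) : ℂ) =
      ((((∑ i ∈ s, ‖a i‖ ^ 2) * (v - u)) : ℝ) : ℂ) +
        ∑ i ∈ s, ∑ j ∈ s.erase i, a i * conj (a j) * E i j := by
    rw [ofReal_intervalIntegral_norm_sum_sq, sum_mul, ofReal_sum, ← sum_add_distrib]
    exact sum_congr rfl fun i hi => by
      rw [← hdiag]; exact (add_sum_erase s (fun j => a i * conj (a j) * E i j) hi).symm
  have hre := congrArg re hexpand
  rw [ofReal_re, add_re, ofReal_re] at hre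
  rw [hre]
  gcongr
  refine (re_le_norm _).trans <| (norm_sum_le _ _).trans <| sum_le_sum fun i hi => ?_
  exact (norm_sum_le _ _).trans <| sum_le_sum (hoff i hi)

end MeanValue

section Pseudomoment

open Complex

theorem Real.rpow_le_tangent {a M q : ℝ} (ha : 0 ≤ a) (hM : 0 < M) (hq0 : 0 ≤ q) (hq1 : q ≤ 1) :
    a ^ q ≤ M ^ q + q * M ^ (q - 1) * (a - M) := by
  have hbern := rpow_one_add_le_one_add_mul_self (s := a / M - 1) (by
    have := div_nonneg ha hM.le; linarith) hq0 hq1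
  rw [add_sub_cancel, Real.div_rpow ha hM.le, div_le_iff₀ (by positivity)] at hbern
  rw [Real.rpow_sub_one hM.ne']
  calc a ^ q ≤ (1 + q * (a / M - 1)) * M ^ q := hbern
    _ = M ^ q + q * (M ^ q / M) * (a - M) := by field_simp

theorem partialSum_eq_sum_exp (g : ℕ → ℂ) (x t : ℝ) :
    partialSum g x t = ∑ n ∈ Icc 1 ⌊x⌋₊,
      g n * (n : ℂ) ^ (-(1 / 2 : ℂ)) * cexp (↑(-Real.log n) * I * t) := by
  refine sum_congr rfl fun n hn => ?_
  have hn0 : (n : ℂ) ≠ 0 := Nat.cast_ne_zero.2 (by grind)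
  rw [sub_eq_add_neg, cpow_add _ _ hn0, cpow_def_of_ne_zero hn0 (-(I * t)), ← natCast_log,
    mul_assoc]
  congr 3
  push_cast
  ring

theorem norm_mul_natCast_cpow_neg_half_sq (z : ℂ) {n : ℕ} (hn : 0 < n) :
    ‖z * (n : ℂ) ^ (-(1 / 2 : ℂ))‖ ^ 2 = ‖z‖ ^ 2 / n := by
  rw [norm_mul, norm_natCast_cpow_of_pos hn, mul_pow, ← Real.rpow_mul_natCast (by positivity)]
  norm_num [Real.rpow_neg_one, div_eq_mul_inv]

theorem exists_intervalIntegral_norm_partialSum_sq_le (g : ℕ → ℂ) (x : ℝ) :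
    ∃ K, ∀ u v : ℝ, ∫ t in u..v, ‖partialSum g x t‖ ^ 2 ≤ meanSquare g ⌊x⌋₊ * (v - u) + K := by
  have hinj : Set.InjOn (fun n : ℕ => -Real.log n) (Icc 1 ⌊x⌋₊) := fun m hm n hn h => by
    have hm : (0 : ℝ) < m := by simp at hm; exact_mod_cast hm.1
    have hn : (0 : ℝ) < n := by simp at hn; exact_mod_cast hn.1
    exact_mod_cast Real.log_injOn_pos hm hn (neg_inj.1 h)
  obtain ⟨K, hK⟩ := exists_intervalIntegral_norm_sum_sq_le (Icc 1 ⌊x⌋₊)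
    (fun n => g n * (n : ℂ) ^ (-(1 / 2 : ℂ))) hinj
  refine ⟨K, fun u v => ?_⟩
  have hms : ∑ n ∈ Icc 1 ⌊x⌋₊, ‖g n * (n : ℂ) ^ (-(1 / 2 : ℂ))‖ ^ 2 = meanSquare g ⌊x⌋₊ :=
    sum_congr rfl fun n hn => norm_mul_natCast_cpow_neg_half_sq _ (by simp at hn; omega)
  simpa only [partialSum_eq_sum_exp, hms] using hK u v

theorem continuous_partialSum (g : ℕ → ℂ) (x : ℝ) : Continuous (partialSum g x) := by
  rw [funext (partialSum_eq_sum_exp g x)]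
  fun_prop

theorem intervalIntegral_norm_rpow_two_mul_le {F : ℝ → ℂ} (hF : Continuous F) {M q : ℝ}
    (hM : 0 < M) (hq0 : 0 ≤ q) (hq1 : q ≤ 1) {u v : ℝ} (huv : u ≤ v) :
    ∫ t in u..v, ‖F t‖ ^ (2 * q) ≤
      M ^ q * (v - u) + q * M ^ (q - 1) * ((∫ t in u..v, ‖F t‖ ^ 2) - M * (v - u)) := by
  set c := q * M ^ (q - 1)
  have htangent : ∀ t, ‖F t‖ ^ (2 * q) ≤ M ^ q + c * (‖F t‖ ^ 2 - M) := fun t => by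
    rw [Real.rpow_mul (norm_nonneg _), Real.rpow_two]
    exact Real.rpow_le_tangent (by positivity) hM hq0 hq1
  have hsq : Continuous fun t => ‖F t‖ ^ 2 := by fun_prop
  refine (intervalIntegral.integral_mono_on huv
    ((hF.norm.rpow_const fun _ => Or.inr (by positivity)).intervalIntegrable (μ := volume) u v)
    ((by fun_prop : Continuous fun t => M ^ q + c * (‖F t‖ ^ 2 - M)).intervalIntegrable u v)
    fun t _ => htangent t).trans_eq ?_
  rw [intervalIntegral.integral_add intervalIntegrable_const
    ((by fun_prop : Continuous fun t => c * (‖F t‖ ^ 2 - M)).intervalIntegrable _ _),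
    intervalIntegral.integral_const_mul,
    intervalIntegral.integral_sub (hsq.intervalIntegrable _ _) intervalIntegrable_const]
  simp only [intervalIntegral.integral_const, smul_eq_mul]
  ring

theorem IsPseudomoment.le_meanSquare_rpow {g : ℕ → ℂ} {q x Ψ : ℝ}
    (hΨ : IsPseudomoment g q x Ψ) (hq0 : 0 ≤ q) (hq1 : q ≤ 1) (hM : 0 < meanSquare g ⌊x⌋₊) :
    Ψ ≤ meanSquare g ⌊x⌋₊ ^ q := by
  set M := meanSquare g ⌊x⌋₊
  set c := q * M ^ (q - 1)
  obtain ⟨K, hK⟩ := exists_intervalIntegral_norm_partialSum_sq_le g x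
  have hmean : ∀ T > 0, 1 / T * ∫ t in T..2 * T, ‖partialSum g x t‖ ^ (2 * q) ≤
      M ^ q + c * K / T := by
    intro T hT
    have hint := intervalIntegral_norm_rpow_two_mul_le (continuous_partialSum g x) hM hq0 hq1
      (by linarith : T ≤ 2 * T)
    have hc : 0 ≤ c := by positivity
    have hsq := hK T (2 * T)
    rw [one_div, inv_mul_le_iff₀ hT, mul_add, mul_div_cancel₀ _ hT.ne']
    nlinarith
  refine le_of_tendsto_of_tendsto hΨ ?_ ((eventually_gt_atTop 0).mono hmean)
  have h0 : Tendsto (fun T : ℝ => c * K / T) atTop (nhds 0) :=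
    tendsto_const_nhds.div_atTop tendsto_id
  simpa using tendsto_const_nhds.add h0

end Pseudomoment

open Real

theorem pseudomoment_bounded_for_tiny_q_general
    (g : ℕ → ℂ) (A B θ : ℝ) (hθ : θ < 1 / 48)
    (hmult : IsMult g) (hbound : GBound g A B θ) :
    ∃ C > 0, ∃ x₀ : ℝ, ∀ x : ℝ, x₀ ≤ x →
      ∀ q : ℝ, 0 < q → q ≤ 1 / Real.log (Real.log x) →
      ∀ Ψ : ℝ, IsPseudomoment g q x Ψ → Ψ ≤ C := by
  set c := B ^ 2 + 4 * A ^ 2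
  have hc : 0 ≤ c := by positivity
  refine ⟨exp (12 * c), exp_pos _, exp (exp 1), fun x hx q hq0 hq Ψ hΨ => ?_⟩
  set N := ⌊x⌋₊
  have hx0 : 0 < x := (exp_pos _).trans_le hx
  have hlogx : exp 1 ≤ log x := by rwa [le_log_iff_exp_le hx0]
  have hloglog : 1 ≤ log (log x) := by rwa [le_log_iff_exp_le ((exp_pos 1).trans_le hlogx)]
  have hN : 2 ≤ N := Nat.le_floor (by norm_num; linarith [add_one_le_exp 1, add_one_le_exp (exp 1)])
  rw [le_div_iff₀ (by linarith)] at hq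
  have hq1 : q ≤ 1 := by nlinarith
  have hqloglog : q * log (log N) ≤ 1 := le_trans (mul_le_mul_of_nonneg_left
    (log_le_log (log_pos (by exact_mod_cast hN)) (log_le_log (by positivity)
      (Nat.floor_le hx0.le))) hq0.le) hq
  have hM : 1 ≤ meanSquare g N :=
    single_le_sum (f := fun n => ‖g n‖ ^ 2 / (n : ℝ)) (fun n _ => by positivity)
      (mem_Icc.2 ⟨le_rfl, by omega⟩) |>.trans_eq' (by simp [hmult.1])
  calc Ψ ≤ meanSquare g N ^ q := hΨ.le_meanSquare_rpow hq0.le hq1 (by linarith)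
    _ ≤ exp (c * (4 * log (log N) + 8)) ^ q :=
        rpow_le_rpow (by linarith) (meanSquare_le_exp hmult hbound (by linarith) hN) hq0.le
    _ = exp (c * (4 * (q * log (log N)) + 8 * q)) := by rw [← exp_mul]; ring_nf
    _ ≤ exp (12 * c) := exp_le_exp.2 (by nlinarith)

/-- Pseudomoments are bounded for very small `q`: there is `C > 0`
depending only on `A, B, θ` such that for all sufficiently large `x` and all
`0 < q ≤ 1/(log log x)`, `Ψ_{2q,g}(x) ≤ C`. -/
theorem pseudomoment_bounded_for_tiny_q
    (g : ℕ → ℂ) (A B θ : ℝ) (hA : 0 < A) (hB : 0 < B) (hθ0 : 0 < θ) (hθ : θ < 1 / 48)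
    (hmult : IsMult g) (hbound : GBound g A B θ) :
    ∃ C > 0, ∃ x₀ : ℝ, ∀ x : ℝ, x₀ ≤ x →
      ∀ q : ℝ, 0 < q → q ≤ 1 / Real.log (Real.log x) →
      ∀ Ψ : ℝ, IsPseudomoment g q x Ψ → Ψ ≤ C :=
  pseudomoment_bounded_for_tiny_q_general g A B θ hθ hmult hbound
end
end

section
/- Let g : ℕ → ℂ be a multiplicative function satisfying |g(n)| ≤ min(A·n^θ, B^{Ω(n)}) for all n ≥ 1 (constants A, B > 0, fixed 0 < θ < 1/48), and suppose ∑_{p ≤ x, p prime} |g(p)|²/p = α·log log x + O(1) for a fixed constant α > 0. Let X be a Steinhaus random multiplicative function. There is a constant C > 0 such that for all sufficiently large x, with K = ⌊log log log x⌋, uniformly over integers 0 ≤ k ≤ K+1, reals T ≥ e^k/log x, and reals σ ≥ −2(k+1)/log x: ∫_T^{2T} E[|H_{k,σ}(t)|²] dt ≤ C·T·(e^{−k}·log x)^{α}. -/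
open MeasureTheory ProbabilityTheory Filter Finset
open scoped BigOperators Classical Real ENNReal

noncomputable section

/-!
Fix `t` and put `y = x^{e^{-k}}`, `s = 1/2 + σ + it`. The factors of `H_{k,σ}(t)` are
independent, so `E|H|²` is the product over `p ≤ y` of `E|1 + τ_p|²`, where
`τ_p = ∑_{j ≥ 1} g(p^j) X(p)^j p^{-js}` has mean zero because `E X(p)^j = 0` for `j ≥ 1`; hence
each factor is at most `1 + (∑_j |g(p^j)| p^{-jσ'})²`, `σ' = Re s`. The bound
`|g(p^j)| ≤ A p^{jθ}` and `σ' - θ ≥ 11/24` make this `≤ exp(|g(p)|² p^{-2σ'} + O(p^{-11/8}))`.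
Since `σ log y ≥ -2`, `p^{-2σ} = 1 + O(log p / log y)` for `p ≤ y`, so by Selberg's condition
and Chebyshev's bound `∑_{p ≤ y} log p / p = O(log y)` (with `|g(p)| ≤ B`) the exponent is
`α log log y + O(1)`. Thus `E|H_{k,σ}(t)|² ≪ (log y)^α = (e^{-k} log x)^α` uniformly in `t`,
and integrating over `[T, 2T]` gives the claim.
-/

open Real

instance isProbabilityMeasure_circleMeasure : IsProbabilityMeasure circleMeasure := by
  constructor
  rw [circleMeasure, Measure.map_apply (by fun_prop) MeasurableSet.univ]
  simp only [Set.preimage_univ, Measure.smul_apply, Measure.restrict_apply MeasurableSet.univ,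
    Set.univ_inter, Real.volume_Ioc, sub_zero, smul_eq_mul]
  exact ENNReal.inv_mul_cancel (by simp [Real.pi_pos]) ENNReal.ofReal_ne_top

lemma ae_norm_eq_one_circleMeasure : ∀ᵐ z ∂circleMeasure, ‖z‖ = 1 := by
  rw [circleMeasure, ae_map_iff (by fun_prop)
    ((isClosed_eq continuous_norm continuous_const).measurableSet)]
  filter_upwards with θ
  simp [Complex.norm_exp]

lemma integral_pow_circleMeasure {m : ℕ} (hm : m ≠ 0) : ∫ z, z ^ m ∂circleMeasure = 0 := by
  rw [circleMeasure, integral_map (by fun_prop) (by fun_prop), integral_smul_measure,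
    ← intervalIntegral.integral_of_le (by positivity)]
  have hexp : ∀ θ : ℝ, Complex.exp (θ * Complex.I) ^ m = Complex.exp ((m * Complex.I) * θ) :=
    fun θ => by rw [← Complex.exp_nat_mul]; ring_nf
  have hperiod : (m : ℂ) * Complex.I * (2 * π) = (m : ℤ) * (2 * π * Complex.I) := by
    push_cast; ring
  simp_rw [hexp]
  rw [integral_exp_mul_complex (by simpa [Complex.ext_iff] using hm)]
  simp [hperiod]

section PowerSeriesOnCircle

variable {c : ℕ → ℂ}

lemma norm_mul_pow_of_norm_eq_one {z : ℂ} (hz : ‖z‖ = 1) (a : ℂ) (n : ℕ) : ‖a * z ^ n‖ = ‖a‖ := by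
  simp [hz]

lemma aestronglyMeasurable_tsum_circleMeasure (hc : Summable fun j => ‖c j‖) :
    AEStronglyMeasurable (fun z => ∑' j, c j * z ^ (j + 1)) circleMeasure := by
  refine aestronglyMeasurable_of_tendsto_ae atTop
    (f := fun N z => ∑ j ∈ range N, c j * z ^ (j + 1)) (fun N => by fun_prop) ?_
  filter_upwards [ae_norm_eq_one_circleMeasure] with z hz
  refine (Summable.of_norm ?_).hasSum.tendsto_sum_nat
  simpa only [norm_mul_pow_of_norm_eq_one hz] using hc

lemma integral_tsum_circleMeasure (hc : Summable fun j => ‖c j‖) :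
    ∫ z, ∑' j, c j * z ^ (j + 1) ∂circleMeasure = 0 := by
  have hnorm : ∀ j, ∫ z, ‖c j * z ^ (j + 1)‖ ∂circleMeasure = ‖c j‖ := fun j => by
    rw [integral_congr_ae (g := fun _ => ‖c j‖)]
    · simp
    · filter_upwards [ae_norm_eq_one_circleMeasure] with z hz
      exact norm_mul_pow_of_norm_eq_one hz _ _
  have hint : ∀ j, Integrable (fun z => c j * z ^ (j + 1)) circleMeasure := fun j =>
    Integrable.of_bound (by fun_prop) ‖c j‖ (by
      filter_upwards [ae_norm_eq_one_circleMeasure] with z hz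
      exact (norm_mul_pow_of_norm_eq_one hz _ _).le)
  rw [← integral_tsum_of_summable_integral_norm hint (by simpa only [hnorm] using hc)]
  simp [integral_const_mul, integral_pow_circleMeasure]

lemma integral_norm_one_add_tsum_sq_le (hc : Summable fun j => ‖c j‖) :
    ∫ z, ‖1 + ∑' j, c j * z ^ (j + 1)‖ ^ 2 ∂circleMeasure ≤ 1 + (∑' j, ‖c j‖) ^ 2 := by
  set τ : ℂ → ℂ := fun z => ∑' j, c j * z ^ (j + 1)
  have hτ_le : ∀ᵐ z ∂circleMeasure, ‖τ z‖ ≤ ∑' j, ‖c j‖ := by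
    filter_upwards [ae_norm_eq_one_circleMeasure] with z hz
    refine (norm_tsum_le_tsum_norm ?_).trans_eq ?_ <;>
      simp only [norm_mul_pow_of_norm_eq_one hz, hc]
  have hτ_int : Integrable τ circleMeasure :=
    Integrable.of_bound (aestronglyMeasurable_tsum_circleMeasure hc) _ hτ_le
  have hτ_sq_le : ∀ᵐ z ∂circleMeasure, ‖τ z‖ ^ 2 ≤ (∑' j, ‖c j‖) ^ 2 := by
    filter_upwards [hτ_le] with z hz using pow_le_pow_left₀ (norm_nonneg _) hz 2
  have hsq_int : Integrable (fun z => ‖τ z‖ ^ 2) circleMeasure :=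
    Integrable.of_bound (hτ_int.1.norm.pow 2) _ (by simpa using hτ_sq_le)
  have hexpand : ∀ z, ‖1 + τ z‖ ^ 2 = 1 + 2 * (τ z).re + ‖τ z‖ ^ 2 := fun z => by
    simp only [← Complex.normSq_eq_norm_sq, Complex.normSq_apply, Complex.add_re,
      Complex.add_im, Complex.one_re, Complex.one_im]
    ring
  have hre_int : Integrable (fun z => 2 * (τ z).re) circleMeasure := hτ_int.re.const_mul 2
  have hre : ∫ z, (τ z).re ∂circleMeasure = 0 :=
    (integral_re hτ_int).trans (by rw [integral_tsum_circleMeasure hc, RCLike.zero_re])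
  show ∫ z, ‖1 + τ z‖ ^ 2 ∂circleMeasure ≤ _
  simp_rw [hexpand]
  rw [integral_add (f := fun z => 1 + 2 * (τ z).re) ((integrable_const 1).add hre_int) hsq_int,
    integral_add (integrable_const 1) hre_int, integral_const_mul, hre]
  simpa using integral_mono_ae hsq_int (integrable_const _) hτ_sq_le

end PowerSeriesOnCircle

lemma integral_finset_prod_comp_of_iIndepFun {ι Ω β : Type*} [MeasurableSpace Ω]
    [MeasurableSpace β] {μ : Measure Ω} {X : ι → Ω → β} (hX : iIndepFun X μ)
    (mX : ∀ i, AEMeasurable (X i) μ) (s : Finset ι) {f : ι → β → ℝ}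
    (hf : ∀ i ∈ s, AEStronglyMeasurable (f i) (μ.map (X i))) :
    ∫ ω, ∏ i ∈ s, f i (X i ω) ∂μ = ∏ i ∈ s, ∫ ω, f i (X i ω) ∂μ := by
  have hs := (hX.precomp Subtype.val_injective).integral_fun_prod_comp
    (f := fun i : s => f i) (fun i => mX i) (fun i => hf i i.2)
  refine Eq.trans ?_ (hs.trans (Finset.prod_coe_sort s fun i => ∫ ω, f i (X i ω) ∂μ))
  exact congrArg _ (funext fun ω => (Finset.prod_coe_sort s fun i => f i (X i ω)).symm)

def eulerCoeff (g : ℕ → ℂ) (p : ℕ) (s : ℂ) (j : ℕ) : ℂ :=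
  g (p ^ (j + 1)) * (p : ℂ) ^ (-(((j : ℂ) + 1) * s))

lemma eulerFactor_eq {Ωs : Type*} (g : ℕ → ℂ) (X : ℕ → Ωs → ℂ) (p : ℕ) (s : ℂ) (ω : Ωs) :
    eulerFactor g X p s ω = 1 + ∑' j, eulerCoeff g p s j * X p ω ^ (j + 1) := by
  simp only [eulerFactor, eulerCoeff, mul_right_comm]

section Steinhaus

variable {Ωs : Type*} [MeasureSpace Ωs] {X : ℕ → Ωs → ℂ}

lemma IsSteinhaus.integral_prod_comp (hX : IsSteinhaus X) {P : Finset ℕ}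
    (hP : ∀ p ∈ P, p.Prime) {f : ℕ → ℂ → ℝ}
    (hf : ∀ p ∈ P, AEStronglyMeasurable (f p) circleMeasure) :
    ∫ ω, ∏ p ∈ P, f p (X p ω) = ∏ p ∈ P, ∫ z, f p z ∂circleMeasure := by
  have hmap : ∀ p ∈ P, volume.map (X p) = circleMeasure := fun p hp => hX.2.2.2.2 p (hP p hp)
  have hprod := integral_finset_prod_comp_of_iIndepFun hX.2.2.2.1
    (fun q => (hX.1 q).aemeasurable) (P.subtype Nat.Prime) (f := fun q => f q)
    (fun q hq => (hmap q (Finset.mem_subtype.1 hq)).symm ▸ hf q (Finset.mem_subtype.1 hq))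
  calc ∫ ω, ∏ p ∈ P, f p (X p ω)
      = ∫ ω, ∏ q ∈ P.subtype Nat.Prime, f q (X q ω) :=
        congrArg _ (funext fun ω => (Finset.prod_subtype_of_mem (fun p => f p (X p ω)) hP).symm)
    _ = ∏ p ∈ P, ∫ ω, f p (X p ω) :=
        hprod.trans (Finset.prod_subtype_of_mem (fun p => ∫ ω, f p (X p ω)) hP)
    _ = ∏ p ∈ P, ∫ z, f p z ∂circleMeasure := Finset.prod_congr rfl fun p hp => by
        rw [← hmap p hp, integral_map (hX.1 p).aemeasurable ((hmap p hp).symm ▸ hf p hp)]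

lemma IsSteinhaus.integral_norm_sq_prod_eulerFactor_le (hX : IsSteinhaus X) {P : Finset ℕ}
    (hP : ∀ p ∈ P, p.Prime) {g : ℕ → ℂ} {s : ℂ}
    (hc : ∀ p ∈ P, Summable fun j => ‖eulerCoeff g p s j‖) :
    ∫ ω, ‖∏ p ∈ P, eulerFactor g X p s ω‖ ^ 2 ≤
      ∏ p ∈ P, (1 + (∑' j, ‖eulerCoeff g p s j‖) ^ 2) := by
  simp_rw [norm_prod, ← Finset.prod_pow, eulerFactor_eq]
  rw [hX.integral_prod_comp hP (f := fun p z => ‖1 + ∑' j, eulerCoeff g p s j * z ^ (j + 1)‖ ^ 2)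
    fun p hp => ((aestronglyMeasurable_tsum_circleMeasure (hc p hp)).const_add 1).norm.pow 2]
  exact Finset.prod_le_prod (fun p _ => integral_nonneg fun z => by positivity)
    fun p hp => integral_norm_one_add_tsum_sq_le (hc p hp)

end Steinhaus

lemma sq_tsum_le_of_le_geometric {a : ℕ → ℝ} {A r : ℝ} (ha : ∀ j, 0 ≤ a j) (hA : 0 ≤ A)
    (hr0 : 0 ≤ r) (hr : r ≤ 7 / 8) (hle : ∀ j, a j ≤ A * r ^ (j + 1)) :
    Summable a ∧ (∑' j, a j) ^ 2 ≤ a 0 ^ 2 + 80 * A ^ 2 * r ^ 3 := by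
  have hgeom := summable_geometric_of_lt_one hr0 (by linarith)
  have hsum : Summable a :=
    .of_nonneg_of_le ha (fun j => (hle j).trans_eq (by ring)) (hgeom.mul_left (A * r))
  refine ⟨hsum, ?_⟩
  have htail : ∑' j, a (j + 1) ≤ 8 * A * r ^ 2 := by
    have hinv : (1 - r)⁻¹ ≤ 8 := by rw [inv_le_comm₀ (by linarith) (by norm_num)]; linarith
    calc ∑' j, a (j + 1) ≤ ∑' j, A * r ^ 2 * r ^ j :=
          (hsum.comp_injective (add_left_injective 1)).tsum_le_tsum
            (fun j => (hle (j + 1)).trans_eq (by ring)) (hgeom.mul_left _)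
      _ = A * r ^ 2 * (1 - r)⁻¹ := by rw [tsum_mul_left, tsum_geometric_of_lt_one hr0 (by linarith)]
      _ ≤ 8 * A * r ^ 2 := by nlinarith [mul_nonneg hA (sq_nonneg r)]
  have htail0 : 0 ≤ ∑' j, a (j + 1) := tsum_nonneg fun j => ha _
  have ha0 : a 0 ≤ A * r := by simpa using hle 0
  rw [hsum.tsum_eq_zero_add]
  have hr1 : r ^ 4 ≤ r ^ 3 := pow_le_pow_of_le_one hr0 (by linarith) (by norm_num)
  nlinarith [mul_le_mul ha0 htail htail0 (by positivity),
    mul_le_mul htail htail htail0 (by positivity), mul_le_mul_of_nonneg_left hr1 (sq_nonneg A)]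

section EulerCoefficients

variable {g : ℕ → ℂ} {A B θ : ℝ}

lemma GBound.norm_le_rpow (h : GBound g A B θ) {n : ℕ} (hn : 1 ≤ n) : ‖g n‖ ≤ A * (n : ℝ) ^ θ :=
  (h n hn).trans (min_le_left _ _)

lemma GBound.norm_le_of_prime (h : GBound g A B θ) {p : ℕ} (hp : p.Prime) : ‖g p‖ ≤ B := by
  simpa [Nat.primeFactorsList_prime hp] using (h p hp.one_lt.le).trans (min_le_right _ _)

lemma norm_eulerCoeff {p : ℕ} (hp : p.Prime) (s : ℂ) (j : ℕ) :
    ‖eulerCoeff g p s j‖ = ‖g (p ^ (j + 1))‖ * ((p : ℝ) ^ (-s.re)) ^ (j + 1) := by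
  rw [eulerCoeff, norm_mul, Complex.norm_natCast_cpow_of_pos hp.pos, ← Real.rpow_natCast,
    ← Real.rpow_mul (Nat.cast_nonneg p)]
  congr 2
  simp
  ring

lemma GBound.norm_eulerCoeff_le (h : GBound g A B θ) {p : ℕ} (hp : p.Prime)
    (s : ℂ) (j : ℕ) : ‖eulerCoeff g p s j‖ ≤ A * ((p : ℝ) ^ (θ - s.re)) ^ (j + 1) := by
  have hp0 : (0 : ℝ) ≤ p := Nat.cast_nonneg p
  rw [norm_eulerCoeff hp, sub_eq_add_neg, Real.rpow_add (by exact_mod_cast hp.pos), mul_pow,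
    ← mul_assoc]
  gcongr
  simpa [← Real.rpow_natCast, ← Real.rpow_mul hp0, mul_comm θ] using
    h.norm_le_rpow (Nat.one_le_pow (j + 1) _ hp.pos)

lemma rpow_neg_eleven_div_twentyfour_le {p : ℝ} (hp : 2 ≤ p) : p ^ (-(11 / 24 : ℝ)) ≤ 7 / 8 := by
  calc p ^ (-(11 / 24 : ℝ)) ≤ 2 ^ (-(11 / 24 : ℝ)) :=
        Real.rpow_le_rpow_of_nonpos (by norm_num) hp (by norm_num)
    _ ≤ 7 / 8 := by
        rw [← pow_le_pow_iff_left₀ (by positivity) (by norm_num) (by norm_num : 24 ≠ 0),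
          ← Real.rpow_natCast, ← Real.rpow_mul (by norm_num)]
        norm_num

lemma GBound.one_add_sq_tsum_norm_eulerCoeff_le (h : GBound g A B θ) (hA : 0 ≤ A) {p : ℕ}
    (hp : p.Prime) {s : ℂ} (hs : θ + 11 / 24 ≤ s.re) :
    Summable (fun j => ‖eulerCoeff g p s j‖) ∧
      1 + (∑' j, ‖eulerCoeff g p s j‖) ^ 2 ≤
        exp (‖g p‖ ^ 2 * (p : ℝ) ^ (-(2 * s.re)) + 80 * A ^ 2 * (p : ℝ) ^ (-(11 / 8 : ℝ))) := by
  have hp2 : (2 : ℝ) ≤ p := by exact_mod_cast hp.two_le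
  set r := (p : ℝ) ^ (θ - s.re)
  have hr0 : 0 ≤ r := by positivity
  have hr : r ≤ (p : ℝ) ^ (-(11 / 24 : ℝ)) :=
    Real.rpow_le_rpow_of_exponent_le (by linarith) (by linarith)
  obtain ⟨hsum, hsq⟩ := sq_tsum_le_of_le_geometric (fun j => norm_nonneg _) hA hr0
    (hr.trans (rpow_neg_eleven_div_twentyfour_le hp2)) (h.norm_eulerCoeff_le hp s)
  refine ⟨hsum, ?_⟩
  have h0 : ‖eulerCoeff g p s 0‖ ^ 2 = ‖g p‖ ^ 2 * (p : ℝ) ^ (-(2 * s.re)) := by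
    rw [norm_eulerCoeff hp, zero_add, pow_one, pow_one, mul_pow, ← Real.rpow_mul_natCast
      (by positivity)]
    ring_nf
  have hr3 : r ^ 3 ≤ (p : ℝ) ^ (-(11 / 8 : ℝ)) := by
    refine (pow_le_pow_left₀ hr0 hr 3).trans_eq ?_
    rw [← Real.rpow_natCast, ← Real.rpow_mul (by positivity)]
    norm_num
  rw [h0] at hsq
  have := add_one_le_exp
    (‖g p‖ ^ 2 * (p : ℝ) ^ (-(2 * s.re)) + 80 * A ^ 2 * (p : ℝ) ^ (-(11 / 8 : ℝ)))
  nlinarith [mul_le_mul_of_nonneg_left hr3 (by positivity : (0 : ℝ) ≤ 80 * A ^ 2)]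

end EulerCoefficients

lemma mem_primesUpTo {y : ℝ} {p : ℕ} : p ∈ primesUpTo y ↔ p.Prime ∧ (p : ℝ) ≤ y := by
  simp only [primesUpTo, Finset.mem_filter, Finset.mem_range, and_iff_right_iff_imp]
  exact fun h => Nat.lt_succ_of_le (Nat.le_floor h.2)

/-- The dyadic block `2^i ≤ p < 2^(i+1)` contributes at most `θ(2^(i+1)) / 2^i ≤ 2 log 4`. -/
lemma sum_log_div_filter_log_two_eq_le {s : Finset ℕ} (hs : ∀ p ∈ s, p.Prime) (i : ℕ) :
    ∑ p ∈ s with Nat.log 2 p = i, log p / p ≤ 4 * log 2 := by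
  calc ∑ p ∈ s with Nat.log 2 p = i, log p / p
      ≤ ∑ p ∈ s with Nat.log 2 p = i, log p / (2 ^ (i + 1) : ℕ) * 2 := by
        refine Finset.sum_le_sum fun p hp => ?_
        obtain ⟨hps, rfl⟩ := Finset.mem_filter.1 hp
        have hp := hs p hps
        have : (2 ^ (Nat.log 2 p + 1) : ℝ) ≤ 2 * p := by
          rw [pow_succ, mul_comm]
          gcongr
          exact_mod_cast Nat.pow_log_le_self 2 hp.ne_zero
        rw [div_mul_eq_mul_div, div_le_div_iff₀ (by exact_mod_cast hp.pos) (by positivity)]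
        push_cast
        nlinarith [log_nonneg (by exact_mod_cast hp.one_lt.le : (1 : ℝ) ≤ p)]
    _ ≤ Chebyshev.theta (2 ^ (i + 1) : ℕ) / (2 ^ (i + 1) : ℕ) * 2 := by
        rw [← Finset.sum_mul, ← Finset.sum_div, Chebyshev.theta_eq_sum_primesLE_log]
        gcongr
        intro p hp
        obtain ⟨hps, rfl⟩ := Finset.mem_filter.1 hp
        exact Nat.mem_primesLE.2 ⟨(Nat.lt_pow_succ_log_self one_lt_two p).le, hs p hps⟩
    _ ≤ 4 * log 2 := by
        rw [div_mul_eq_mul_div, div_le_iff₀ (by positivity)]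
        have := Chebyshev.theta_le_log4_mul_x (Nat.cast_nonneg (2 ^ (i + 1)))
        rw [show (4 : ℝ) = 2 ^ 2 by norm_num, log_pow] at this
        push_cast at this ⊢
        nlinarith

lemma sum_primesUpTo_log_div_le {y : ℝ} (hy : 2 ≤ y) :
    ∑ p ∈ primesUpTo y, log p / p ≤ 8 * log y := by
  set N := Nat.log 2 ⌊y⌋₊
  have hmaps : ∀ p ∈ primesUpTo y, Nat.log 2 p ∈ range (N + 1) := fun p hp =>
    Finset.mem_range_succ_iff.2 (Nat.log_mono_right (Nat.le_floor (mem_primesUpTo.1 hp).2))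
  have hN : N * log 2 ≤ log y := by
    rw [← log_pow]
    refine log_le_log (by positivity) ?_
    calc (2 : ℝ) ^ N = (2 ^ N : ℕ) := by push_cast; rfl
      _ ≤ ⌊y⌋₊ := by exact_mod_cast Nat.pow_log_le_self 2 (Nat.floor_pos.2 (by linarith)).ne'
      _ ≤ y := Nat.floor_le (by linarith)
  have hlog2 : log 2 ≤ log y := log_le_log (by norm_num) hy
  rw [← Finset.sum_fiberwise_of_maps_to hmaps]
  calc ∑ i ∈ range (N + 1), ∑ p ∈ primesUpTo y with Nat.log 2 p = i, log p / p
      ≤ ∑ i ∈ range (N + 1), 4 * log 2 := Finset.sum_le_sum fun i _ =>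
        sum_log_div_filter_log_two_eq_le (fun p hp => (mem_primesUpTo.1 hp).1) i
    _ ≤ 8 * log y := by
        rw [Finset.sum_const, Finset.card_range, nsmul_eq_mul]
        push_cast
        nlinarith

lemma exp_le_one_add_mul_exp {v a : ℝ} (hv0 : 0 ≤ v) (hva : v ≤ a) : exp v ≤ 1 + v * exp a := by
  have h1 : (1 - v) * exp v ≤ 1 :=
    calc (1 - v) * exp v ≤ exp (-v) * exp v :=
          mul_le_mul_of_nonneg_right (by linarith [add_one_le_exp (-v)]) (exp_pos v).le
      _ = 1 := by rw [← exp_add, neg_add_cancel, exp_zero]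
  nlinarith [exp_le_exp.2 hva]

lemma rpow_neg_two_mul_le {p y σ : ℝ} (hp : 1 ≤ p) (hpy : p ≤ y) (hσ : -2 ≤ σ * log y) :
    p ^ (-(2 * σ)) ≤ 1 + 4 * exp 4 * log p / log y := by
  have hlogp : 0 ≤ log p := log_nonneg hp
  have hlogpy : log p ≤ log y := log_le_log (by linarith) hpy
  rcases hlogp.eq_or_lt with h | hlogp
  · simp [Real.rpow_def_of_pos (by linarith : 0 < p), ← h]
  set v := 4 * log p / log y
  have hlogy : 0 < log y := hlogp.trans_le hlogpy
  have hv : -(2 * σ) * log p ≤ v := by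
    rw [le_div_iff₀ hlogy]
    nlinarith
  have hv4 : v ≤ 4 := by rw [div_le_iff₀ hlogy]; linarith
  calc p ^ (-(2 * σ)) = exp (-(2 * σ) * log p) := by
        rw [Real.rpow_def_of_pos (by linarith), mul_comm]
    _ ≤ exp v := exp_le_exp.2 hv
    _ ≤ 1 + v * exp 4 := exp_le_one_add_mul_exp (by positivity) hv4
    _ = 1 + 4 * exp 4 * log p / log y := by ring

lemma SelbergCond.sum_norm_sq_mul_rpow_le {g : ℕ → ℂ} {α B : ℝ} (hsel : SelbergCond g α)
    (hB : ∀ p : ℕ, p.Prime → ‖g p‖ ≤ B) :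
    ∃ C, ∀ y : ℝ, 16 ≤ y → ∀ σ : ℝ, -2 ≤ σ * log y →
      ∑ p ∈ primesUpTo y, ‖g p‖ ^ 2 * (p : ℝ) ^ (-(1 + 2 * σ)) ≤
        α * log (log y) + C := by
  obtain ⟨C, -, hC⟩ := hsel
  refine ⟨C + 32 * exp 4 * B ^ 2, fun y hy σ hσ => ?_⟩
  have hlogy : 0 < log y := log_pos (by linarith)
  have hterm : ∀ p ∈ primesUpTo y, ‖g p‖ ^ 2 * (p : ℝ) ^ (-(1 + 2 * σ)) ≤
      ‖g p‖ ^ 2 / p + 4 * exp 4 * B ^ 2 / log y * (log p / p) := by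
    intro p hp
    obtain ⟨hp, hpy⟩ := mem_primesUpTo.1 hp
    have hp1 : (1 : ℝ) ≤ p := by exact_mod_cast hp.one_lt.le
    have hgB : ‖g p‖ ^ 2 ≤ B ^ 2 := pow_le_pow_left₀ (norm_nonneg _) (hB p hp) 2
    rw [neg_add, rpow_add (by linarith), rpow_neg_one]
    calc ‖g p‖ ^ 2 * ((p : ℝ)⁻¹ * (p : ℝ) ^ (-(2 * σ)))
        ≤ ‖g p‖ ^ 2 * ((p : ℝ)⁻¹ * (1 + 4 * exp 4 * log p / log y)) := by
          gcongr
          exact rpow_neg_two_mul_le hp1 hpy hσ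
      _ = ‖g p‖ ^ 2 / p + 4 * exp 4 * ‖g p‖ ^ 2 / log y * (log p / p) := by ring
      _ ≤ ‖g p‖ ^ 2 / p + 4 * exp 4 * B ^ 2 / log y * (log p / p) := by
          gcongr
  calc ∑ p ∈ primesUpTo y, ‖g p‖ ^ 2 * (p : ℝ) ^ (-(1 + 2 * σ))
      ≤ ∑ p ∈ primesUpTo y, ‖g p‖ ^ 2 / p +
          4 * exp 4 * B ^ 2 / log y * ∑ p ∈ primesUpTo y, log p / p := by
        rw [Finset.mul_sum, ← Finset.sum_add_distrib]
        exact Finset.sum_le_sum hterm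
    _ ≤ (α * log (log y) + C) + 4 * exp 4 * B ^ 2 / log y * (8 * log y) := by
        gcongr
        · linarith [(abs_le.1 (hC y hy)).2]
        · exact sum_primesUpTo_log_div_le (by linarith)
    _ = α * log (log y) + (C + 32 * exp 4 * B ^ 2) := by
        field_simp
        ring

lemma eventually_mul_log_le_atTop {c : ℝ} (hc : 0 < c) : ∀ᶠ ℓ in atTop, c * log ℓ ≤ ℓ := by
  filter_upwards [isLittleO_log_id_atTop.bound (inv_pos.2 hc), eventually_ge_atTop 0]
    with ℓ hbound hℓ
  rw [Real.norm_eq_abs, Real.norm_eq_abs, id, abs_of_nonneg hℓ] at hbound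
  rw [← le_div_iff₀' hc, div_eq_inv_mul]
  exact (le_abs_self _).trans hbound

lemma eventually_bounds_of_le_floor_log_log : ∀ᶠ ℓ in atTop, ∀ k : ℕ,
    k ≤ ⌊log (log ℓ)⌋₊ + 1 → log 16 ≤ exp (-k) * ℓ ∧ 96 * ((k : ℝ) + 1) ≤ ℓ := by
  filter_upwards [tendsto_log_atTop.eventually_ge_atTop 1,
    eventually_mul_log_le_atTop (by positivity : 0 < log 16 * exp 2),
    eventually_mul_log_le_atTop (by norm_num : (0 : ℝ) < 192), eventually_ge_atTop 576]
    with ℓ hlog h16 h192 hℓ k hk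
  have hloglog : 0 ≤ log (log ℓ) := log_nonneg hlog
  have hk : (k : ℝ) ≤ log (log ℓ) + 2 := by
    have := Nat.floor_le hloglog
    have : (k : ℝ) ≤ ⌊log (log ℓ)⌋₊ + 1 := by exact_mod_cast hk
    linarith
  constructor
  · have hexp : exp k ≤ exp 2 * log ℓ :=
      calc exp k ≤ exp (log (log ℓ) + 2) := exp_le_exp.2 hk
        _ = exp 2 * log ℓ := by rw [exp_add, exp_log (by linarith), mul_comm]
    rw [exp_neg, inv_mul_eq_div, le_div_iff₀ (exp_pos _)]
    nlinarith [log_nonneg (by norm_num : (1 : ℝ) ≤ 16)]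
  · nlinarith [log_le_self (by linarith : 0 ≤ log ℓ)]

/-- `σ ≥ -1/48` together with `θ < 1/48` gives the margin `θ + 11/24 ≤ Re s` needed by
`GBound.one_add_sq_tsum_norm_eulerCoeff_le`. -/
lemma exists_bounds_of_le_floor_log_log_log : ∃ x₀ : ℝ, ∀ x, x₀ ≤ x → ∀ k : ℕ,
    k ≤ ⌊log (log (log x))⌋₊ + 1 → ∀ σ : ℝ, -(2 * ((k : ℝ) + 1)) / log x ≤ σ →
      1 < x ∧ 16 ≤ x ^ exp (-(k : ℝ)) ∧ -2 ≤ σ * log (x ^ exp (-(k : ℝ))) ∧ -(1 / 48) ≤ σ := by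
  obtain ⟨x₀, hx₀⟩ := eventually_atTop.1
    ((tendsto_log_atTop.eventually eventually_bounds_of_le_floor_log_log).and
      (eventually_gt_atTop 1))
  refine ⟨x₀, fun x hx k hk σ hσ => ?_⟩
  obtain ⟨hbounds, hx1⟩ := hx₀ x hx
  obtain ⟨hL16, hk96⟩ := hbounds k hk
  have hlogx : 0 < log x := log_pos hx1
  have hlogy : log (x ^ exp (-(k : ℝ))) = exp (-k) * log x := log_rpow (by linarith) _
  rw [div_le_iff₀ hlogx] at hσ
  refine ⟨hx1, ?_, ?_, by nlinarith⟩
  · rwa [← log_le_log_iff (by norm_num) (by positivity), hlogy]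
  · have : ((k : ℝ) + 1) * exp (-k) ≤ 1 := by
      rw [exp_neg, mul_inv_le_iff₀ (exp_pos _)]
      linarith [add_one_le_exp (k : ℝ)]
    rw [hlogy]
    nlinarith [exp_pos (-(k : ℝ))]

section SecondMoment

variable {Ωs : Type*} [MeasureSpace Ωs] {X : ℕ → Ωs → ℂ} {g : ℕ → ℂ} {A B θ α : ℝ}

lemma IsSteinhaus.integral_norm_sq_prod_eulerFactor_le_exp (hX : IsSteinhaus X)
    (hbound : GBound g A B θ) (hA : 0 ≤ A) {P : Finset ℕ} (hP : ∀ p ∈ P, p.Prime) {s : ℂ}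
    (hs : θ + 11 / 24 ≤ s.re) :
    ∫ ω, ‖∏ p ∈ P, eulerFactor g X p s ω‖ ^ 2 ≤
      exp (∑ p ∈ P,
        (‖g p‖ ^ 2 * (p : ℝ) ^ (-(2 * s.re)) + 80 * A ^ 2 * (p : ℝ) ^ (-(11 / 8 : ℝ)))) := by
  have hfactor := fun p hp => hbound.one_add_sq_tsum_norm_eulerCoeff_le hA (hP p hp) hs
  refine (hX.integral_norm_sq_prod_eulerFactor_le hP fun p hp => (hfactor p hp).1).trans ?_
  rw [exp_sum]
  exact Finset.prod_le_prod (fun p _ => by positivity) fun p hp => (hfactor p hp).2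

lemma IsSteinhaus.exists_integral_norm_sq_prod_eulerFactor_le (hX : IsSteinhaus X)
    (hbound : GBound g A B θ) (hA : 0 ≤ A) (hsel : SelbergCond g α) :
    ∃ C > 0, ∀ y : ℝ, 16 ≤ y → ∀ σ : ℝ, -2 ≤ σ * log y → θ + 11 / 24 ≤ 1 / 2 + σ → ∀ t : ℝ,
      ∫ ω, ‖∏ p ∈ primesUpTo y, eulerFactor g X p (((1 / 2 + σ : ℝ) : ℂ) + t * Complex.I) ω‖ ^ 2
        ≤ C * log y ^ α := by
  obtain ⟨C, hC⟩ := hsel.sum_norm_sq_mul_rpow_le fun p hp => hbound.norm_le_of_prime hp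
  set Z := ∑' n : ℕ, (n : ℝ) ^ (-(11 / 8 : ℝ))
  have hZ : Summable fun n : ℕ => (n : ℝ) ^ (-(11 / 8 : ℝ)) := summable_nat_rpow.2 (by norm_num)
  refine ⟨exp (C + 80 * A ^ 2 * Z), exp_pos _, fun y hy σ hσ hσθ t => ?_⟩
  refine (hX.integral_norm_sq_prod_eulerFactor_le_exp hbound hA
    (fun p hp => (mem_primesUpTo.1 hp).1) (by simpa using hσθ)).trans ?_
  rw [rpow_def_of_pos (log_pos (by linarith)), ← exp_add]
  refine exp_le_exp.2 ?_
  have hexponent : ∀ p : ℕ, (p : ℝ) ^ (-(2 * (((1 / 2 + σ : ℝ) : ℂ) + t * Complex.I).re)) =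
      (p : ℝ) ^ (-(1 + 2 * σ)) := fun p => by
    congr 1
    simp only [Complex.add_re, Complex.ofReal_re, Complex.mul_re, Complex.ofReal_im,
      Complex.I_re, Complex.I_im]
    ring
  have hsmall : ∑ p ∈ primesUpTo y, (p : ℝ) ^ (-(11 / 8 : ℝ)) ≤ Z :=
    hZ.sum_le_tsum _ fun n _ => by positivity
  rw [Finset.sum_add_distrib, ← Finset.mul_sum]
  simp only [hexponent]
  nlinarith [hC y hy σ hσ, mul_le_mul_of_nonneg_left hsmall (by positivity : (0 : ℝ) ≤ 80 * A ^ 2)]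

end SecondMoment

lemma intervalIntegral_le_mul_sub_of_le {f : ℝ → ℝ} {a b M : ℝ} (hab : a ≤ b)
    (hf0 : ∀ t, 0 ≤ f t) (hfM : ∀ t, f t ≤ M) : ∫ t in a..b, f t ≤ M * (b - a) := by
  have hnorm : ‖∫ t in a..b, f t‖ ≤ M * |b - a| :=
    intervalIntegral.norm_integral_le_of_norm_le_const fun t _ => by
      rw [Real.norm_of_nonneg (hf0 t)]
      exact hfM t
  rw [Real.norm_eq_abs, abs_of_nonneg (sub_nonneg.2 hab)] at hnorm
  exact (le_abs_self _).trans hnorm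

theorem second_moment_short_interval_general
    (g : ℕ → ℂ) (A B θ α : ℝ) (hA : 0 < A) (hθ : θ < 1 / 48)
    (hbound : GBound g A B θ) (hsel : SelbergCond g α)
    (Ωs : Type) [MeasureSpace Ωs]
    (X : ℕ → Ωs → ℂ) (hX : IsSteinhaus X) :
    ∃ C > 0, ∃ x₀ : ℝ, ∀ x : ℝ, x₀ ≤ x →
      ∀ k : ℕ, k ≤ ⌊Real.log (Real.log (Real.log x))⌋₊ + 1 →
      ∀ T : ℝ, Real.exp (k : ℝ) / Real.log x ≤ T →
      ∀ σ : ℝ, -(2 * ((k : ℝ) + 1)) / Real.log x ≤ σ →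
        (∫ t in T..(2 * T), ∫ ω, ‖Hk g X x k σ t ω‖ ^ 2)
          ≤ C * T * (Real.exp (-(k : ℝ)) * Real.log x) ^ α := by
  obtain ⟨C, hC0, hC⟩ := hX.exists_integral_norm_sq_prod_eulerFactor_le hbound hA.le hsel
  obtain ⟨x₀, hx₀⟩ := exists_bounds_of_le_floor_log_log_log
  refine ⟨C, hC0, x₀, fun x hx k hk T hT σ hσ => ?_⟩
  obtain ⟨hx1, hy16, hσy, hσ48⟩ := hx₀ x hx k hk σ hσ
  have hT0 : 0 ≤ T := (div_pos (exp_pos _) (log_pos hx1)).le.trans hT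
  calc (∫ t in T..(2 * T), ∫ ω, ‖Hk g X x k σ t ω‖ ^ 2)
      ≤ C * log (x ^ exp (-(k : ℝ))) ^ α * (2 * T - T) :=
        intervalIntegral_le_mul_sub_of_le (by linarith) (fun t => integral_nonneg fun ω => by
          positivity) fun t => hC _ hy16 σ hσy (by linarith) t
    _ = C * T * (exp (-(k : ℝ)) * log x) ^ α := by
        rw [log_rpow (by linarith)]
        ring

/-- Second moment of `H_{k,σ}` on short intervals: uniformly over
`0 ≤ k ≤ K+1` (`K = ⌊log log log x⌋`), `T ≥ e^k/log x` and `σ ≥ -2(k+1)/log x`,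
`∫_T^{2T} E[|H_{k,σ}(t)|²] dt ≪ T (e^{-k} log x)^α`. -/
theorem second_moment_short_interval
    (g : ℕ → ℂ) (A B θ α : ℝ) (hA : 0 < A) (hB : 0 < B) (hθ0 : 0 < θ) (hθ : θ < 1 / 48)
    (hα : 0 < α) (hmult : IsMult g) (hbound : GBound g A B θ) (hsel : SelbergCond g α)
    (Ωs : Type) [MeasureSpace Ωs] [IsProbabilityMeasure (volume : Measure Ωs)]
    (X : ℕ → Ωs → ℂ) (hX : IsSteinhaus X) :
    ∃ C > 0, ∃ x₀ : ℝ, ∀ x : ℝ, x₀ ≤ x →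
      ∀ k : ℕ, k ≤ ⌊Real.log (Real.log (Real.log x))⌋₊ + 1 →
      ∀ T : ℝ, Real.exp (k : ℝ) / Real.log x ≤ T →
      ∀ σ : ℝ, -(2 * ((k : ℝ) + 1)) / Real.log x ≤ σ →
        (∫ t in T..(2 * T), ∫ ω, ‖Hk g X x k σ t ω‖ ^ 2)
          ≤ C * T * (Real.exp (-(k : ℝ)) * Real.log x) ^ α :=
  second_moment_short_interval_general g A B θ α hA hθ hbound hsel Ωs X hX
end
end
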